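/- arXiv:1909.07843 — 4 statements merged into one kernel-verified Lean document; each statement's English description precedes it below -/
import Mathlib

section
/- Let ρ : ℝ^n → ℝ be a coherent risk measure, i.e., ρ is monotone (Z ≤ Z' componentwise implies ρ(Z) ≤ ρ(Z')), subadditive (ρ(Z + Z') ≤ ρ(Z) + ρ(Z')), positively homogeneous (ρ(tZ) = t·ρ(Z) for all t ≥ 0), and translation equivariant (ρ(Z + c·𝟙) = ρ(Z) + c for all c ∈ ℝ). Then there exists a nonempty compact convex set 𝒫 ⊆ Δ^n such that for every Z ∈ ℝ^n, ρ(Z) = max_{q ∈ 𝒫} Σ_{i=1}^n q(i) Z(i), with the maximum attained; one may take 𝒫 = {q ∈ Δ^n : Σ_i q(i) Z(i) ≤ ρ(Z) for all Z ∈ ℝ^n}. -/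
/-- Representation theorem for coherent risk measures (Artzner et al.):
every coherent risk measure `ρ` on `ℝ^n` (monotone, subadditive, positively homogeneous,
translation equivariant) is the attained maximum of expectations over a nonempty compact
convex subset `P` of the probability simplex; one may take
`P = {q ∈ Δ^n | ∀ Z, ∑ i, q i * Z i ≤ ρ Z}`. -/
theorem crm_representation
    (n : ℕ) (ρ : (Fin n → ℝ) → ℝ)
    (hmono : ∀ Z Z' : Fin n → ℝ, (∀ i, Z i ≤ Z' i) → ρ Z ≤ ρ Z')
    (hsub : ∀ Z Z' : Fin n → ℝ, ρ (Z + Z') ≤ ρ Z + ρ Z')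
    (hpos : ∀ t : ℝ, 0 ≤ t → ∀ Z : Fin n → ℝ, ρ (t • Z) = t * ρ Z)
    (htrans : ∀ Z : Fin n → ℝ, ∀ c : ℝ, ρ (Z + fun _ => c) = ρ Z + c) :
    ∃ P : Set (Fin n → ℝ),
      P.Nonempty ∧ IsCompact P ∧ Convex ℝ P ∧ P ⊆ stdSimplex ℝ (Fin n) ∧
      P = {q ∈ stdSimplex ℝ (Fin n) | ∀ Z : Fin n → ℝ, ∑ i, q i * Z i ≤ ρ Z} ∧
      ∀ Z : Fin n → ℝ,
        (∀ q ∈ P, ∑ i, q i * Z i ≤ ρ Z) ∧ ∃ q ∈ P, ρ Z = ∑ i, q i * Z i := by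
  classical
  set P : Set (Fin n → ℝ) :=
    {q ∈ stdSimplex ℝ (Fin n) | ∀ Z : Fin n → ℝ, ∑ i, q i * Z i ≤ ρ Z} with hPdef
  have hρ0 : ρ 0 = 0 := by
    have := hpos 0 le_rfl 0
    simpa using this
  have hNhom : ∀ c : ℝ, 0 < c → ∀ x : Fin n → ℝ, ρ (c • x) = c * ρ x := fun c hc x =>
    hpos c hc.le x
  -- from a linear map g ≤ ρ, build q ∈ P with g Z = ∑ q i * Z i
  have mkq : ∀ g : (Fin n → ℝ) →ₗ[ℝ] ℝ, (∀ x, g x ≤ ρ x) →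
      ∃ q ∈ P, ∀ Z : Fin n → ℝ, g Z = ∑ i, q i * Z i := by
    intro g hg
    set q : Fin n → ℝ := fun i => g (Pi.single i 1) with hq
    have hrep : ∀ Z : Fin n → ℝ, g Z = ∑ i, q i * Z i := by
      intro Z
      have hZ : Z = ∑ i, Z i • (Pi.single i (1:ℝ) : Fin n → ℝ) := by
        ext j
        simp [Finset.sum_apply, Pi.single_apply, mul_comm]
      calc g Z = g (∑ i, Z i • (Pi.single i (1:ℝ) : Fin n → ℝ)) := by rw [← hZ]
        _ = ∑ i, Z i * q i := by simp [map_sum, hq, smul_eq_mul]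
        _ = ∑ i, q i * Z i := by simp [mul_comm]
    have hqZle : ∀ Z : Fin n → ℝ, ∑ i, q i * Z i ≤ ρ Z := fun Z => (hrep Z) ▸ hg Z
    have hqnn : ∀ i, 0 ≤ q i := by
      intro i
      have h1 : g (-(Pi.single i 1)) ≤ ρ (-(Pi.single i 1)) := hg _
      have h2 : ρ (-(Pi.single i 1)) ≤ ρ 0 := by
        apply hmono
        intro j
        by_cases h : j = i <;> simp [h, Pi.single_apply]
      have := h1.trans (h2.trans_eq hρ0)
      simpa [hq] using this
    have hone : g (fun _ => (1 : ℝ)) = 1 := by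
      have h1 : g (fun _ => (1 : ℝ)) ≤ ρ (fun _ => (1 : ℝ)) := hg _
      have h2 : g (-(fun _ => (1 : ℝ))) ≤ ρ (-(fun _ => (1 : ℝ))) := hg _
      have e1 : ρ (fun _ => (1 : ℝ)) = 1 := by
        have := htrans 0 1
        simpa [hρ0] using this
      have e2 : ρ (-(fun _ => (1 : ℝ))) = -1 := by
        have := htrans 0 (-1)
        have h' : (-(fun _ => (1 : ℝ))) = ((0 : Fin n → ℝ) + fun _ => (-1 : ℝ)) := by
          ext j; simp
        rw [h', this, hρ0, zero_add]
      have hle : g (fun _ => (1 : ℝ)) ≤ 1 := h1.trans_eq e1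
      have hge : (1 : ℝ) ≤ g (fun _ => (1 : ℝ)) := by
        have : -(g (fun _ => (1 : ℝ))) ≤ -1 := by simpa [e2] using h2
        linarith
      linarith
    have hqsum : ∑ i, q i = 1 := by
      have : (fun _ => (1 : ℝ)) = ∑ i : Fin n, Pi.single i (1 : ℝ) := by
        ext j; simp [Finset.sum_apply, Pi.single_apply]
      rw [← hone, this, map_sum]
    exact ⟨q, ⟨⟨hqnn, hqsum⟩, hqZle⟩, hrep⟩
  -- existence of a dominating linear functional attaining ρ Z
  have key : ∀ Z : Fin n → ℝ, ∃ q ∈ P, ρ Z = ∑ i, q i * Z i := by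
    intro Z
    by_cases hZ0 : Z = 0
    · obtain ⟨g, _, hgle⟩ := exists_extension_of_le_sublinear
        ((0 : (Fin n → ℝ) →ₗ[ℝ] ℝ).toPMap ⊥) ρ hNhom hsub
        (by rintro ⟨x, hx⟩
            obtain rfl : x = 0 := by simpa using hx
            simp [hρ0])
      obtain ⟨q, hqP, hrep⟩ := mkq g hgle
      exact ⟨q, hqP, by simp [hZ0, hρ0, ← hrep]⟩
    · have hf : ∀ x : (LinearPMap.mkSpanSingleton (K := ℝ) (σ := RingHom.id ℝ) Z (ρ Z) hZ0).domain,
          (LinearPMap.mkSpanSingleton (K := ℝ) (σ := RingHom.id ℝ) Z (ρ Z) hZ0) x ≤ ρ x := by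
        rintro ⟨x, hx⟩
        obtain ⟨c, rfl⟩ := Submodule.mem_span_singleton.1 hx
        have happ : (LinearPMap.mkSpanSingleton (K := ℝ) (σ := RingHom.id ℝ) Z (ρ Z) hZ0) ⟨c • Z, hx⟩ = c • ρ Z :=
          LinearPMap.mkSpanSingleton'_apply _ _ _ c _
        rw [happ]
        rcases le_or_gt 0 c with hc | hc
        · rw [hpos c hc Z]; simp [smul_eq_mul]
        · have h1 : ρ (c • Z) + ρ ((-c) • Z) ≥ ρ 0 := by
            have := hsub (c • Z) ((-c) • Z)
            have h0 : c • Z + (-c) • Z = 0 := by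
              rw [← add_smul]; simp
            rw [h0] at this
            linarith
          have h2 : ρ ((-c) • Z) = (-c) * ρ Z := hpos (-c) (by linarith) Z
          rw [hρ0] at h1
          simp only [smul_eq_mul]
          linarith
      obtain ⟨g, hgeq, hgle⟩ := exists_extension_of_le_sublinear
        (LinearPMap.mkSpanSingleton (K := ℝ) (σ := RingHom.id ℝ) Z (ρ Z) hZ0) ρ hNhom hsub hf
      obtain ⟨q, hqP, hrep⟩ := mkq g hgle
      refine ⟨q, hqP, ?_⟩
      have hZmem : Z ∈ Submodule.span ℝ {Z} := Submodule.mem_span_singleton_self Z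
      have := hgeq ⟨Z, hZmem⟩
      rw [LinearPMap.mkSpanSingleton_apply ℝ ℝ hZ0 (ρ Z)] at this
      rw [← hrep]
      exact this.symm
  -- P properties
  have hPsub : P ⊆ stdSimplex ℝ (Fin n) := fun q hq => hq.1
  have hPne : P.Nonempty := (key 0).imp fun q hq => hq.1
  have hPclosed : IsClosed P := by
    have : P = stdSimplex ℝ (Fin n) ∩ ⋂ Z : Fin n → ℝ, {q : Fin n → ℝ | ∑ i, q i * Z i ≤ ρ Z} := by
      ext q
      constructor
      · rintro ⟨h1, h2⟩
        exact ⟨h1, Set.mem_iInter.2 h2⟩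
      · rintro ⟨h1, h2⟩
        exact ⟨h1, fun Z => Set.mem_iInter.1 h2 Z⟩
    rw [this]
    refine (isClosed_stdSimplex ℝ _).inter (isClosed_iInter fun Z => ?_)
    exact isClosed_le (by continuity) continuous_const
  have hPcompact : IsCompact P :=
    (isCompact_stdSimplex ℝ (Fin n)).of_isClosed_subset hPclosed hPsub
  have hPconvex : Convex ℝ P := by
    intro q hq r hr a b ha hb hab
    refine ⟨(convex_stdSimplex ℝ (Fin n)) hq.1 hr.1 ha hb hab, fun Z => ?_⟩
    have h1 := hq.2 Z
    have h2 := hr.2 Z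
    have hterm : ∀ i, (a • q + b • r) i * Z i = a * (q i * Z i) + b * (r i * Z i) := by
      intro i
      simp only [Pi.add_apply, Pi.smul_apply, smul_eq_mul]
      ring
    have : ∑ i, (a • q + b • r) i * Z i = a * ∑ i, q i * Z i + b * ∑ i, r i * Z i := by
      rw [Finset.sum_congr rfl fun i _ => hterm i, Finset.sum_add_distrib,
        ← Finset.mul_sum, ← Finset.mul_sum]
    rw [this]
    calc a * ∑ i, q i * Z i + b * ∑ i, r i * Z i ≤ a * ρ Z + b * ρ Z := by
          exact add_le_add (mul_le_mul_of_nonneg_left h1 ha) (mul_le_mul_of_nonneg_left h2 hb)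
      _ = ρ Z := by rw [← add_mul, hab, one_mul]
  exact ⟨P, hPne, hPcompact, hPconvex, hPsub, rfl, fun Z => ⟨fun q hq => hq.2 Z, key Z⟩⟩
end

section
/- (Theorem 2, KKT-based inference: half-space containment of the risk envelope.) Under the single-step setup, suppose each component of g : ℝ^m → ℝ^L is convex and differentiable, U = {u : u⁻(j) ≤ u(j) ≤ u⁺(j)} with u⁻(j) < u⁺(j) for all j, P is a nonempty compact convex subset of Δ^L, and u* ∈ U minimizes φ(u) = max_{q ∈ P} ⟨g(u), q⟩ over U. With J⁺ = {j : u*(j) = u⁺(j)} and J⁻ = {j : u*(j) = u⁻(j)}, define the feasible set F = {v ∈ Δ^L : ∂_j⟨g(u), v⟩|_{u*} ≤ 0 for j ∈ J⁺, ∂_j⟨g(u), v⟩|_{u*} ≥ 0 for j ∈ J⁻, ∂_j⟨g(u), v⟩|_{u*} = 0 for j ∉ J⁺ ∪ J⁻} and τ' = sup_{v ∈ F} ⟨g(u*), v⟩. Then F is nonempty, τ' is attained, φ(u*) ≤ τ', and every q ∈ P satisfies ⟨g(u*), q⟩ ≤ τ'. In other words, P ⊆ H ∩ Δ^L where H = {v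 ∈ ℝ^L : ⟨g(u*), v⟩ ≤ τ'}. -/
/-!
The maximisers `q` of `⟨g u*, ·⟩` over `P` form a compact convex set. If none of them satisfied
the KKT conditions, i.e. if none of the gradients `∇ᵤ⟨g u, q⟩ |_{u*}` lay in the closed convex
cone of KKT sign patterns, a hyperplane would strictly separate these gradients from that cone.
Its normal `c` is a feasible direction of the box at `u*` along which all these gradients are
negative, and a one-sided Danskin argument (maximisers at `u* + t c` accumulate, as `t → 0⁺`, at
maximisers at `u*`) shows that `φ` strictly decreases along `c`, contradicting the optimality of
`u*`. So some maximiser `q` lies in `F`, whence `φ(u*) = ⟨g u*, q⟩ ≤ τ'`; and `F` is compact, so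
`τ'` is attained.
-/

open Filter Topology Matrix

theorem IsMaxOn.sSup_setOf_eq {α : Type*} {P : Set α} {f : α → ℝ} {q : α}
    (hmax : IsMaxOn f P q) (hq : q ∈ P) : sSup {x | ∃ p ∈ P, x = f p} = f q :=
  IsGreatest.csSup_eq ⟨⟨q, hq, rfl⟩, by rintro x ⟨p, hp, rfl⟩; exact hmax hp⟩

theorem eventually_nhdsGT_add_mul_le {x hi d : ℝ} (hx : x ≤ hi) (hd : x = hi → d ≤ 0) :
    ∀ᶠ t in 𝓝[>] 0, x + t * d ≤ hi := by
  rcases hx.lt_or_eq with hlt | rfl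
  · have hcont : Tendsto (fun t : ℝ => x + t * d) (𝓝[>] 0) (𝓝 x) :=
      ((by fun_prop : Continuous fun t : ℝ => x + t * d).tendsto' 0 x (by simp)).mono_left
        nhdsWithin_le_nhds
    exact hcont.eventually_le_const hlt
  · filter_upwards [self_mem_nhdsWithin] with t ht
    nlinarith [hd rfl, Set.mem_Ioi.1 ht]

theorem eventually_nhdsGT_add_smul_mem_box {κ : Type*} [Finite κ] {lo hi u d : κ → ℝ}
    (hu : ∀ j, lo j ≤ u j ∧ u j ≤ hi j) (hhi : ∀ j, u j = hi j → d j ≤ 0)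
    (hlo : ∀ j, u j = lo j → 0 ≤ d j) :
    ∀ᶠ t in 𝓝[>] (0 : ℝ), ∀ j, lo j ≤ (u + t • d) j ∧ (u + t • d) j ≤ hi j := by
  refine eventually_all.2 fun j => ?_
  have hle_hi := eventually_nhdsGT_add_mul_le (hu j).2 (hhi j)
  have hge_lo := eventually_nhdsGT_add_mul_le (neg_le_neg (hu j).1)
    fun h => neg_nonpos.2 (hlo j (neg_inj.1 h))
  filter_upwards [hle_hi, hge_lo] with t h₁ h₂
  simp only [Pi.add_apply, Pi.smul_apply, smul_eq_mul]
  constructor <;> linarith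

theorem PointedCone.exists_dotProduct_separation {ι : Type*} [Fintype ι] [DecidableEq ι]
    {A : Set (ι → ℝ)} {K : PointedCone ℝ (ι → ℝ)} (hAconv : Convex ℝ A) (hAcomp : IsCompact A)
    (hK : IsClosed (K : Set (ι → ℝ))) (hdisj : Disjoint A K) :
    ∃ c : ι → ℝ, (∀ w ∈ K, 0 ≤ w ⬝ᵥ c) ∧ ∀ a ∈ A, a ⬝ᵥ c < 0 := by
  obtain ⟨f, s, t, hfA, hst, hfK⟩ :=
    geometric_hahn_banach_compact_closed hAconv hAcomp K.convex hK hdisj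
  have ht : t < 0 := by simpa using hfK 0 K.zero_mem
  -- a negative value of `f` on the cone could be rescaled to exactly `t`
  have hfK_nonneg : ∀ w ∈ K, 0 ≤ f w := by
    intro w hw
    by_contra! hneg
    have hr : 0 ≤ t / f w := div_nonneg_of_nonpos ht.le hneg.le
    have := hfK _ (K.smul_mem hr hw)
    simp [div_mul_cancel₀ t hneg.ne] at this
  have hf : ∀ w, f w = w ⬝ᵥ fun j => f (Pi.single j 1) := by
    intro w
    conv_lhs => rw [pi_eq_sum_univ' w, map_sum]
    simp [dotProduct]
  refine ⟨fun j => f (Pi.single j 1), fun w hw => ?_, fun a ha => ?_⟩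
  · rw [← hf]; exact hfK_nonneg w hw
  · rw [← hf]; linarith [hfA a ha]

theorem Filter.Tendsto.dotProduct {α ι : Type*} [Fintype ι] {l : Filter α}
    {f g : α → ι → ℝ} {a b : ι → ℝ} (hf : Tendsto f l (𝓝 a)) (hg : Tendsto g l (𝓝 b)) :
    Tendsto (fun x => f x ⬝ᵥ g x) l (𝓝 (a ⬝ᵥ b)) :=
  ((continuous_fst.dotProduct continuous_snd).tendsto (a, b)).comp (hf.prodMk_nhds hg)

theorem exists_isMaxOn_dotProduct_fderiv_nonneg {E ι : Type*} [NormedAddCommGroup E]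
    [NormedSpace ℝ E] [Fintype ι] {g : E → ι → ℝ} {g' : E →L[ℝ] ι → ℝ} {u c : E}
    (hg : HasFDerivAt g g' u) {P : Set (ι → ℝ)} (hP : IsCompact P)
    (h : ∀ᶠ t in 𝓝[>] (0 : ℝ), ∃ q ∈ P, ∀ p ∈ P, g u ⬝ᵥ p ≤ g (u + t • c) ⬝ᵥ q) :
    ∃ q ∈ P, IsMaxOn (g u ⬝ᵥ ·) P q ∧ 0 ≤ g' c ⬝ᵥ q := by
  obtain ⟨t, ht, hex⟩ := exists_seq_forall_of_frequently (h.and self_mem_nhdsWithin).frequently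
  choose q hqP hq using fun n => (hex n).1
  obtain ⟨q₀, hq₀P, ψ, hψ, hqψ⟩ := hP.tendsto_subseq hqP
  have htψ : Tendsto (t ∘ ψ) atTop (𝓝[>] 0) := ht.comp hψ.tendsto_atTop
  have hline : HasDerivAt (fun s : ℝ => g (u + s • c)) (g' c) 0 := by
    refine HasFDerivAt.comp_hasDerivAt (l := g) _ (by simpa using hg) ?_
    simpa using ((hasDerivAt_id (0 : ℝ)).smul_const c).const_add u
  have hval : Tendsto (fun n => g (u + t (ψ n) • c)) atTop (𝓝 (g u)) := by
    simpa [Function.comp_def] using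
      hline.continuousAt.tendsto.comp (htψ.mono_right nhdsWithin_le_nhds)
  have hslope :
      Tendsto (fun n => (t (ψ n))⁻¹ • (g (u + t (ψ n) • c) - g u)) atTop (𝓝 (g' c)) := by
    simpa [Function.comp_def] using hline.tendsto_slope_zero_right.comp htψ
  refine ⟨q₀, hq₀P, fun p hp => ge_of_tendsto' (hval.dotProduct hqψ) fun n => hq _ p hp,
    ge_of_tendsto' (hslope.dotProduct hqψ) fun n => ?_⟩
  have hpos : 0 < t (ψ n) := (hex (ψ n)).2
  have hle := hq (ψ n) (q (ψ n)) (hqP _)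
  rw [smul_dotProduct, sub_dotProduct, smul_eq_mul]
  exact mul_nonneg (inv_nonneg.2 hpos.le) (sub_nonneg.2 hle)

theorem ConcaveOn.convex_setOf_isMaxOn {E : Type*} [AddCommGroup E] [Module ℝ E] {P : Set E}
    {f : E → ℝ} (hf : ConcaveOn ℝ P f) : Convex ℝ {q ∈ P | IsMaxOn f P q} := by
  intro x hx y hy a b ha hb hab
  refine ⟨hf.1 hx.1 hy.1 ha hb hab, fun p hp => ?_⟩
  have hcomb := hf.2 hx.1 hy.1 ha hb hab
  simp only [smul_eq_mul] at hcomb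
  calc f p = a * f p + b * f p := by rw [← add_mul, hab, one_mul]
    _ ≤ a * f x + b * f y :=
      add_le_add (mul_le_mul_of_nonneg_left (hx.2 hp) ha) (mul_le_mul_of_nonneg_left (hy.2 hp) hb)
    _ ≤ f (a • x + b • y) := hcomb

theorem IsCompact.setOf_isMaxOn {E : Type*} [TopologicalSpace E] {P : Set E} (hP : IsCompact P)
    {f : E → ℝ} (hf : Continuous f) : IsCompact {q ∈ P | IsMaxOn f P q} := by
  have : {q ∈ P | IsMaxOn f P q} = P ∩ ⋂ p ∈ P, f ⁻¹' Set.Ici (f p) := by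
    ext q; simp [isMaxOn_iff]
  rw [this]
  exact hP.inter_right (isClosed_biInter fun p _ => isClosed_Ici.preimage hf)

section BoxKKTCone

variable {κ : Type*}

/-- For `lo < hi`, the vectors `w` with `-w` in the normal cone of the box `[lo, hi]` at `u`:
the sign conditions that KKT imposes on a gradient at a minimiser over the box. -/
def boxKKTCone (lo hi u : κ → ℝ) : PointedCone ℝ (κ → ℝ) where
  carrier := {w | (∀ j, u j = hi j → w j ≤ 0) ∧ (∀ j, u j = lo j → 0 ≤ w j) ∧
    ∀ j, u j ≠ hi j → u j ≠ lo j → w j = 0}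
  add_mem' {w w'} hw hw' :=
    ⟨fun j h => add_nonpos (hw.1 j h) (hw'.1 j h), fun j h => add_nonneg (hw.2.1 j h) (hw'.2.1 j h),
      fun j h h' => by simp [hw.2.2 j h h', hw'.2.2 j h h']⟩
  zero_mem' := ⟨fun _ _ => le_rfl, fun _ _ => le_rfl, fun _ _ _ => rfl⟩
  smul_mem' r w hw :=
    ⟨fun j h => mul_nonpos_of_nonneg_of_nonpos r.2 (hw.1 j h),
      fun j h => mul_nonneg r.2 (hw.2.1 j h), fun j h h' => by simp [hw.2.2 j h h']⟩

variable {lo hi u w : κ → ℝ}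

@[simp]
theorem mem_boxKKTCone : w ∈ boxKKTCone lo hi u ↔ (∀ j, u j = hi j → w j ≤ 0) ∧
    (∀ j, u j = lo j → 0 ≤ w j) ∧ ∀ j, u j ≠ hi j → u j ≠ lo j → w j = 0 :=
  Iff.rfl

theorem isClosed_boxKKTCone : IsClosed (boxKKTCone lo hi u : Set (κ → ℝ)) := by
  show IsClosed {w : κ → ℝ | _ ∧ _ ∧ _}
  simp only [Set.ofPred_and, Set.ofPred_forall]
  refine (isClosed_iInter fun j => isClosed_iInter fun _ => ?_).inter
    ((isClosed_iInter fun j => isClosed_iInter fun _ => ?_).inter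
      (isClosed_iInter fun j => isClosed_iInter fun _ => isClosed_iInter fun _ => ?_))
  · exact isClosed_le (continuous_apply j) continuous_const
  · exact isClosed_le continuous_const (continuous_apply j)
  · exact isClosed_eq (continuous_apply j) continuous_const

theorem single_mem_boxKKTCone [DecidableEq κ] {j : κ} {x : ℝ} (hhi : u j = hi j → x ≤ 0)
    (hlo : u j = lo j → 0 ≤ x) (hint : u j ≠ hi j → u j ≠ lo j → x = 0) :
    Pi.single j x ∈ boxKKTCone lo hi u := by
  refine ⟨fun k => ?_, fun k => ?_, fun k => ?_⟩ <;>
    rcases eq_or_ne k j with rfl | hk <;> simp_all [Pi.single_eq_of_ne]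

theorem sign_of_dotProduct_nonneg_on_boxKKTCone [Fintype κ] [DecidableEq κ] {c : κ → ℝ}
    (hbox : ∀ j, lo j < hi j) (hc : ∀ w ∈ boxKKTCone lo hi u, 0 ≤ w ⬝ᵥ c) :
    (∀ j, u j = hi j → c j ≤ 0) ∧ ∀ j, u j = lo j → 0 ≤ c j := by
  refine ⟨fun j hj => ?_, fun j hj => ?_⟩
  · have hne : u j ≠ lo j := fun h => (hbox j).ne (h.symm.trans hj)
    have := hc _ (single_mem_boxKKTCone (j := j) (x := -1) (fun _ => by norm_num)
      (fun h => absurd h hne) (fun h => absurd hj h))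
    simpa using this
  · have hne : u j ≠ hi j := fun h => (hbox j).ne (hj.symm.trans h)
    have := hc _ (single_mem_boxKKTCone (j := j) (x := 1) (fun h => absurd h hne)
      (fun _ => zero_le_one) (fun _ h => absurd hj h))
    simpa using this

end BoxKKTCone

theorem transpose_toMatrix'_mulVec_dotProduct {ι κ R : Type*} [Fintype ι] [Fintype κ]
    [DecidableEq κ] [CommSemiring R] (f : (κ → R) →ₗ[R] ι → R) (q : ι → R) (c : κ → R) :
    ((LinearMap.toMatrix' f)ᵀ *ᵥ q) ⬝ᵥ c = f c ⬝ᵥ q := by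
  rw [mulVec_transpose, ← dotProduct_mulVec, LinearMap.toMatrix'_mulVec, dotProduct_comm]

theorem HasFDerivAt.fderiv_dotProduct_const_single {ι κ : Type*} [Fintype ι] [Fintype κ]
    [DecidableEq κ] {g : (κ → ℝ) → ι → ℝ} {g' : (κ → ℝ) →L[ℝ] ι → ℝ} {u : κ → ℝ}
    (hg : HasFDerivAt g g' u) (v : ι → ℝ) (j : κ) :
    fderiv ℝ (fun x => g x ⬝ᵥ v) u (Pi.single j 1) =
      ((LinearMap.toMatrix' (g' : (κ → ℝ) →ₗ[ℝ] ι → ℝ))ᵀ *ᵥ v) j := by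
  have hsum :
      HasFDerivAt (fun x => g x ⬝ᵥ v) (∑ i, v i • (ContinuousLinearMap.proj i).comp g') u :=
    HasFDerivAt.fun_sum fun i _ => by
      simpa [mul_comm] using ((hasFDerivAt_apply i (g u)).comp u hg).const_mul (v i)
  rw [hsum.fderiv]
  simp [mulVec, dotProduct, mul_comm]

theorem exists_isMaxOn_transpose_mulVec_mem_boxKKTCone {ι κ : Type*} [Fintype ι] [Fintype κ]
    [DecidableEq κ] {g : (κ → ℝ) → ι → ℝ} {g' : (κ → ℝ) →L[ℝ] ι → ℝ} {lo hi u : κ → ℝ}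
    (hg : HasFDerivAt g g' u) (hbox : ∀ j, lo j < hi j) (hu : ∀ j, lo j ≤ u j ∧ u j ≤ hi j)
    {P : Set (ι → ℝ)} (hPconv : Convex ℝ P) (hPcomp : IsCompact P)
    (hopt : ∀ v : κ → ℝ, (∀ j, lo j ≤ v j ∧ v j ≤ hi j) →
      ∃ q ∈ P, ∀ p ∈ P, g u ⬝ᵥ p ≤ g v ⬝ᵥ q) :
    ∃ q ∈ P, IsMaxOn (g u ⬝ᵥ ·) P q ∧
      (LinearMap.toMatrix' (g' : (κ → ℝ) →ₗ[ℝ] ι → ℝ))ᵀ *ᵥ q ∈ boxKKTCone lo hi u := by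
  set J := LinearMap.toMatrix' (g' : (κ → ℝ) →ₗ[ℝ] ι → ℝ)
  set Q := {q ∈ P | IsMaxOn (g u ⬝ᵥ ·) P q}
  by_contra! hnot
  have hdisj : Disjoint (Jᵀ.mulVecLin '' Q) (boxKKTCone lo hi u) := by
    refine Set.disjoint_left.2 ?_
    rintro _ ⟨q, ⟨hqP, hqmax⟩, rfl⟩
    exact hnot q hqP hqmax
  obtain ⟨c, hcK, hcQ⟩ := PointedCone.exists_dotProduct_separation
    (((dotProductBilin ℝ ℝ (g u)).concaveOn hPconv).convex_setOf_isMaxOn.linear_image _)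
    ((hPcomp.setOf_isMaxOn (continuous_const.dotProduct continuous_id)).image
      (LinearMap.continuous_of_finiteDimensional _)) isClosed_boxKKTCone hdisj
  obtain ⟨hc_hi, hc_lo⟩ := sign_of_dotProduct_nonneg_on_boxKKTCone hbox hcK
  obtain ⟨q, hqP, hqmax, hq⟩ := exists_isMaxOn_dotProduct_fderiv_nonneg hg hPcomp
    ((eventually_nhdsGT_add_smul_mem_box hu hc_hi hc_lo).mono fun t ht => hopt _ ht)
  have hneg := hcQ _ ⟨q, ⟨hqP, hqmax⟩, rfl⟩
  rw [mulVecLin_apply, transpose_toMatrix'_mulVec_dotProduct] at hneg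
  exact hneg.not_ge hq

theorem kkt_inference_halfspace_general
    (L m : ℕ) (g : (Fin m → ℝ) → Fin L → ℝ)
    (hgdiff : ∀ j : Fin L, Differentiable ℝ (fun u => g u j))
    (ulo uhi : Fin m → ℝ) (hbox : ∀ j, ulo j < uhi j)
    (U : Set (Fin m → ℝ)) (hU : U = {u | ∀ j, ulo j ≤ u j ∧ u j ≤ uhi j})
    (P : Set (Fin L → ℝ)) (hPne : P.Nonempty) (hPcomp : IsCompact P)
    (hPconv : Convex ℝ P) (hPsub : P ⊆ stdSimplex ℝ (Fin L))
    (φ : (Fin m → ℝ) → ℝ)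
    (hφ : ∀ u, φ u = sSup {x : ℝ | ∃ q ∈ P, x = ∑ i, g u i * q i})
    (ustar : Fin m → ℝ) (hustar : ustar ∈ U)
    (hopt : ∀ u ∈ U, φ ustar ≤ φ u)
    (F : Set (Fin L → ℝ))
    (hF : F = {v ∈ stdSimplex ℝ (Fin L) |
      (∀ j : Fin m, ustar j = uhi j →
        fderiv ℝ (fun u => ∑ i, g u i * v i) ustar (Pi.single j 1) ≤ 0) ∧
      (∀ j : Fin m, ustar j = ulo j →
        0 ≤ fderiv ℝ (fun u => ∑ i, g u i * v i) ustar (Pi.single j 1)) ∧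
      (∀ j : Fin m, ustar j ≠ uhi j → ustar j ≠ ulo j →
        fderiv ℝ (fun u => ∑ i, g u i * v i) ustar (Pi.single j 1) = 0)})
    (τ' : ℝ) (hτ' : τ' = sSup {x : ℝ | ∃ v ∈ F, x = ∑ i, g ustar i * v i}) :
    F.Nonempty ∧
    (∃ v ∈ F, ∑ i, g ustar i * v i = τ') ∧
    φ ustar ≤ τ' ∧
    (∀ q ∈ P, ∑ i, g ustar i * q i ≤ τ') := by
  subst hU
  have hg : HasFDerivAt g (fderiv ℝ g ustar) ustar :=
    (differentiableAt_pi.2 fun i => hgdiff i ustar).hasFDerivAt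
  set J := LinearMap.toMatrix' (fderiv ℝ g ustar : (Fin m → ℝ) →ₗ[ℝ] Fin L → ℝ)
  have hgrad : ∀ v j, fderiv ℝ (fun u => ∑ i, g u i * v i) ustar (Pi.single j 1) = (Jᵀ *ᵥ v) j :=
    hg.fderiv_dotProduct_const_single
  have hFeq : F = stdSimplex ℝ (Fin L) ∩ (Jᵀ *ᵥ ·) ⁻¹' boxKKTCone ulo uhi ustar := by
    ext v
    simp only [hF, hgrad, Set.mem_ofPred_eq, Set.mem_inter_iff, Set.mem_preimage, SetLike.mem_coe,
      mem_boxKKTCone]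
  have hFcomp : IsCompact F := hFeq ▸ (isCompact_stdSimplex ℝ (Fin L)).inter_right
    (isClosed_boxKKTCone.preimage (continuous_const.matrix_mulVec continuous_id))
  have hcont : ∀ w : Fin L → ℝ, Continuous (w ⬝ᵥ ·) := fun _ =>
    continuous_const.dotProduct continuous_id
  have hmax : ∀ u, ∃ q ∈ P, IsMaxOn (g u ⬝ᵥ ·) P q := fun u =>
    hPcomp.exists_isMaxOn hPne (hcont _).continuousOn
  have hφq : ∀ u, ∀ q ∈ P, IsMaxOn (g u ⬝ᵥ ·) P q → φ u = g u ⬝ᵥ q := fun u q hq hqmax =>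
    (hφ u).trans (hqmax.sSup_setOf_eq hq)
  obtain ⟨q₀, hq₀P, hq₀max, hq₀K⟩ := exists_isMaxOn_transpose_mulVec_mem_boxKKTCone hg hbox
    hustar hPconv hPcomp fun v hv => by
      obtain ⟨q, hqP, hqmax⟩ := hmax v
      obtain ⟨q', hq'P, hq'max⟩ := hmax ustar
      refine ⟨q, hqP, fun p hp => (hq'max hp).trans ?_⟩
      calc g ustar ⬝ᵥ q' = φ ustar := (hφq _ _ hq'P hq'max).symm
        _ ≤ φ v := hopt v hv
        _ = g v ⬝ᵥ q := hφq _ _ hqP hqmax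
  have hq₀F : q₀ ∈ F := hFeq ▸ ⟨hPsub hq₀P, hq₀K⟩
  obtain ⟨v₀, hv₀F, hv₀max⟩ := hFcomp.exists_isMaxOn ⟨q₀, hq₀F⟩ (hcont _).continuousOn
  have hτ : τ' = g ustar ⬝ᵥ v₀ := hτ'.trans (hv₀max.sSup_setOf_eq hv₀F)
  have hφτ : φ ustar ≤ τ' := by
    rw [hφq _ _ hq₀P hq₀max, hτ]
    exact hv₀max hq₀F
  exact ⟨⟨q₀, hq₀F⟩, ⟨v₀, hv₀F, hτ.symm⟩, hφτ,
    fun q hq => (hq₀max hq).trans ((hφq _ _ hq₀P hq₀max).symm.trans_le hφτ)⟩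

/-- (Theorem 2 of the paper, KKT-based inference.) In the single-step
setting, the KKT relaxation solved over the simplex yields a half-space containing the
true risk envelope: with `F` the set of `v ∈ Δ^L` satisfying the stationarity constraints
at the optimal demonstration `u*`, and `τ' = sup_{v ∈ F} ⟨g u*, v⟩`, the set `F` is
nonempty, `τ'` is attained, `φ(u*) ≤ τ'`, and `⟨g u*, q⟩ ≤ τ'` for every `q ∈ P`;
i.e. `P ⊆ H ∩ Δ^L` with `H = {v | ⟨g u*, v⟩ ≤ τ'}`. -/
theorem kkt_inference_halfspace
    (L m : ℕ) (g : (Fin m → ℝ) → Fin L → ℝ)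
    (hgconv : ∀ j : Fin L, ConvexOn ℝ Set.univ (fun u => g u j))
    (hgdiff : ∀ j : Fin L, Differentiable ℝ (fun u => g u j))
    (ulo uhi : Fin m → ℝ) (hbox : ∀ j, ulo j < uhi j)
    (U : Set (Fin m → ℝ)) (hU : U = {u | ∀ j, ulo j ≤ u j ∧ u j ≤ uhi j})
    (P : Set (Fin L → ℝ)) (hPne : P.Nonempty) (hPcomp : IsCompact P)
    (hPconv : Convex ℝ P) (hPsub : P ⊆ stdSimplex ℝ (Fin L))
    (φ : (Fin m → ℝ) → ℝ)
    (hφ : ∀ u, φ u = sSup {x : ℝ | ∃ q ∈ P, x = ∑ i, g u i * q i})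
    (ustar : Fin m → ℝ) (hustar : ustar ∈ U)
    (hopt : ∀ u ∈ U, φ ustar ≤ φ u)
    (F : Set (Fin L → ℝ))
    (hF : F = {v ∈ stdSimplex ℝ (Fin L) |
      (∀ j : Fin m, ustar j = uhi j →
        fderiv ℝ (fun u => ∑ i, g u i * v i) ustar (Pi.single j 1) ≤ 0) ∧
      (∀ j : Fin m, ustar j = ulo j →
        0 ≤ fderiv ℝ (fun u => ∑ i, g u i * v i) ustar (Pi.single j 1)) ∧
      (∀ j : Fin m, ustar j ≠ uhi j → ustar j ≠ ulo j →
        fderiv ℝ (fun u => ∑ i, g u i * v i) ustar (Pi.single j 1) = 0)})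
    (τ' : ℝ) (hτ' : τ' = sSup {x : ℝ | ∃ v ∈ F, x = ∑ i, g ustar i * v i}) :
    F.Nonempty ∧
    (∃ v ∈ F, ∑ i, g ustar i * v i = τ') ∧
    φ ustar ≤ τ' ∧
    (∀ q ∈ P, ∑ i, g ustar i * q i ≤ τ') :=
  kkt_inference_halfspace_general L m g hgdiff ulo uhi hbox U hU P hPne hPcomp hPconv hPsub φ hφ
    ustar hustar hopt F hF τ' hτ'
end

section
/- (Tighter half-space constraint using the current envelope approximation.) In the setting of Theorem 2 (g componentwise convex and differentiable, U a nondegenerate box, P nonempty compact convex ⊆ Δ^L, u* a minimizer of φ(u) = max_{q ∈ P}⟨g(u), q⟩ over U, J⁺ and J⁻ the sets of saturated action indices), let Q be any compact convex set with P ⊆ Q ⊆ Δ^L, and define τ'' = sup {⟨g(u*), v⟩ : v ∈ Q, ∂_j⟨g(u), v⟩|_{u*} ≤ 0 for j ∈ J⁺, ∂_j⟨g(u), v⟩|_{u*} ≥ 0 for j ∈ J⁻, ∂_j⟨g(u), v⟩|_{u*} = 0 for j ∉ J⁺ ∪ J⁻}. Then the feasible set is nonempty, every q ∈ P satisfies ⟨g(u*),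 q⟩ ≤ τ'', and τ'' ≤ τ', where τ' is the analogous supremum taken with Q replaced by Δ^L. -/
open Filter Topology


lemma clm_rep {n : ℕ} (f : (Fin n → ℝ) →L[ℝ] ℝ) (x : Fin n → ℝ) :
    f x = ∑ j, x j * f (Pi.single j 1) := by
  have hx : x = ∑ j, x j • (Pi.single j 1 : Fin n → ℝ) := by
    conv_lhs => rw [← Finset.univ_sum_single x]
    refine Finset.sum_congr rfl fun j _ => ?_
    ext k
    simp [Pi.single_apply, mul_comm]
  conv_lhs => rw [hx]
  rw [map_sum]
  exact Finset.sum_congr rfl fun j _ => by rw [map_smul, smul_eq_mul]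

lemma aux_sep {n : ℕ} {S K : Set (Fin n → ℝ)} (hSconv : Convex ℝ S) (hScomp : IsCompact S)
    (hKconv : Convex ℝ K) (hKcl : IsClosed K) (h0 : (0 : Fin n → ℝ) ∈ K)
    (hcone : ∀ t : ℝ, 0 < t → ∀ y ∈ K, t • y ∈ K) (hdisj : Disjoint S K) :
    ∃ (d : Fin n → ℝ) (ε : ℝ), 0 < ε ∧ (∀ y ∈ K, 0 ≤ ∑ j, y j * d j) ∧
      ∀ s ∈ S, ∑ j, s j * d j ≤ -ε := by
  obtain ⟨f, u, v, hfS, huv, hfK⟩ :=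
    geometric_hahn_banach_compact_closed hSconv hScomp hKconv hKcl hdisj
  have hv0 : v < 0 := by simpa using hfK 0 h0
  refine ⟨fun j => f (Pi.single j 1), -u, by linarith, ?_, ?_⟩
  · intro y hy
    by_contra h
    push_neg at h
    have hfy : f y < 0 := by rw [clm_rep f y]; exact h
    set t : ℝ := v / f y + 1 with ht
    have htpos : 0 < t := by
      have h2 : 0 < v / f y := div_pos_of_neg_of_neg hv0 hfy
      rw [ht]; linarith
    have hmem := hfK (t • y) (hcone t htpos y hy)
    rw [map_smul, smul_eq_mul] at hmem
    have : t * f y < v := by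
      have h1 : v / f y < t := by linarith
      calc t * f y < (v / f y) * f y := by
            exact (mul_lt_mul_right_of_neg hfy).mpr h1
        _ = v := div_mul_cancel₀ v (ne_of_lt hfy)
    linarith
  · intro s hs
    have := hfS s hs
    rw [clm_rep f s] at this
    linarith

lemma aux_fderiv {L m : ℕ} (g : (Fin m → ℝ) → Fin L → ℝ)
    (hg : ∀ i, Differentiable ℝ (fun u => g u i)) (v : Fin L → ℝ) (x y : Fin m → ℝ) :
    fderiv ℝ (fun u => ∑ i, g u i * v i) x y
      = ∑ i, fderiv ℝ (fun u => g u i) x y * v i := by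
  have h1 : fderiv ℝ (fun u => ∑ i, g u i * v i) x
      = ∑ i, v i • fderiv ℝ (fun u => g u i) x := by
    rw [fderiv_fun_sum (fun i _ => ((hg i).differentiableAt).mul_const (v i))]
    exact Finset.sum_congr rfl fun i _ => fderiv_mul_const (hg i).differentiableAt (v i)
  rw [h1, ContinuousLinearMap.sum_apply]
  exact Finset.sum_congr rfl fun i _ => by
    rw [ContinuousLinearMap.smul_apply, smul_eq_mul, mul_comm]

lemma aux_closedT (p q : Prop) :
    IsClosed {t : ℝ | (p → t ≤ 0) ∧ (q → 0 ≤ t) ∧ (¬p → ¬q → t = 0)} := by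
  classical
  by_cases hp : p <;> by_cases hq : q <;> simp only [hp, hq]
  all_goals simp only [forall_true_left, not_true, not_false_iff, false_implies,
    true_implies, and_true, true_and, IsEmpty.forall_iff]
  · exact (isClosed_Iic.preimage continuous_id).inter (isClosed_Ici.preimage continuous_id)
  · exact isClosed_Iic.preimage continuous_id
  · exact isClosed_Ici.preimage continuous_id
  · have : {t : ℝ | t = 0} = {0} := by ext; simp
    rw [this]; exact isClosed_singleton


set_option maxHeartbeats 2000000 in
/-- Tighter half-space constraint using the current envelope
approximation: if `Q` is any compact convex set with `P ⊆ Q ⊆ Δ^L`, then replacing the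
simplex constraint `v ∈ Δ^L` by `v ∈ Q` in the KKT relaxation yields a value
`τ'' = sup {⟨g u*, v⟩ | v ∈ Q, stationarity constraints}` whose feasible set is nonempty,
which still bounds `⟨g u*, q⟩` for all `q ∈ P`, and which satisfies `τ'' ≤ τ'` where `τ'`
is the analogous supremum over the simplex. -/
theorem kkt_inference_tighter_halfspace
    (L m : ℕ) (g : (Fin m → ℝ) → Fin L → ℝ)
    (hgconv : ∀ j : Fin L, ConvexOn ℝ Set.univ (fun u => g u j))
    (hgdiff : ∀ j : Fin L, Differentiable ℝ (fun u => g u j))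
    (ulo uhi : Fin m → ℝ) (hbox : ∀ j, ulo j < uhi j)
    (U : Set (Fin m → ℝ)) (hU : U = {u | ∀ j, ulo j ≤ u j ∧ u j ≤ uhi j})
    (P : Set (Fin L → ℝ)) (hPne : P.Nonempty) (hPcomp : IsCompact P)
    (hPconv : Convex ℝ P) (hPsub : P ⊆ stdSimplex ℝ (Fin L))
    (φ : (Fin m → ℝ) → ℝ)
    (hφ : ∀ u, φ u = sSup {x : ℝ | ∃ q ∈ P, x = ∑ i, g u i * q i})
    (ustar : Fin m → ℝ) (hustar : ustar ∈ U)
    (hopt : ∀ u ∈ U, φ ustar ≤ φ u)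
    (Q : Set (Fin L → ℝ)) (hQcomp : IsCompact Q) (hQconv : Convex ℝ Q)
    (hPQ : P ⊆ Q) (hQsub : Q ⊆ stdSimplex ℝ (Fin L))
    (statConstraints : (Fin L → ℝ) → Prop)
    (hstat : ∀ v, statConstraints v ↔
      (∀ j : Fin m, ustar j = uhi j →
        fderiv ℝ (fun u => ∑ i, g u i * v i) ustar (Pi.single j 1) ≤ 0) ∧
      (∀ j : Fin m, ustar j = ulo j →
        0 ≤ fderiv ℝ (fun u => ∑ i, g u i * v i) ustar (Pi.single j 1)) ∧
      (∀ j : Fin m, ustar j ≠ uhi j → ustar j ≠ ulo j →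
        fderiv ℝ (fun u => ∑ i, g u i * v i) ustar (Pi.single j 1) = 0))
    (τ'' : ℝ)
    (hτ'' : τ'' = sSup {x : ℝ | ∃ v ∈ Q, statConstraints v ∧ x = ∑ i, g ustar i * v i})
    (τ' : ℝ)
    (hτ' : τ' = sSup {x : ℝ |
      ∃ v ∈ stdSimplex ℝ (Fin L), statConstraints v ∧ x = ∑ i, g ustar i * v i}) :
    (∃ v ∈ Q, statConstraints v) ∧
    (∀ q ∈ P, ∑ i, g ustar i * q i ≤ τ'') ∧
    τ'' ≤ τ' := by
  classical
  set f : (Fin L → ℝ) → ℝ := fun q => ∑ i, g ustar i * q i with hfdef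
  have hfc : Continuous f :=
    continuous_finset_sum _ fun i _ => continuous_const.mul (continuous_apply i)
  have hflin : IsLinearMap ℝ f := by
    constructor
    · intro x y
      simp only [hfdef, Pi.add_apply, mul_add]
      exact Finset.sum_add_distrib
    · intro c x
      simp only [hfdef, Pi.smul_apply, smul_eq_mul, Finset.mul_sum]
      exact Finset.sum_congr rfl fun i _ => by ring
  obtain ⟨q0, hq0P, hq0max⟩ := hPcomp.exists_isMaxOn hPne hfc.continuousOn
  have hmax : ∀ q ∈ P, f q ≤ f q0 := fun q hq => hq0max hq
  have hφu : φ ustar = f q0 := by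
    rw [hφ]
    apply IsGreatest.csSup_eq
    exact ⟨⟨q0, hq0P, rfl⟩, by rintro x ⟨q, hq, rfl⟩; exact hmax q hq⟩
  set M : Set (Fin L → ℝ) := {q | q ∈ P ∧ f q0 ≤ f q} with hMdef
  have hMne : M.Nonempty := ⟨q0, hq0P, le_refl _⟩
  have hMeq : M = P ∩ f ⁻¹' (Set.Ici (f q0)) := by ext q; simp [hMdef]
  have hMcomp : IsCompact M := by
    rw [hMeq]; exact hPcomp.inter_right (isClosed_Ici.preimage hfc)
  have hMconv : Convex ℝ M := by
    rw [hMeq]; exact hPconv.inter (convex_halfSpace_ge hflin (f q0))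
  -- matrix of partial derivatives
  set a : Matrix (Fin m) (Fin L) ℝ :=
    Matrix.of fun j i => fderiv ℝ (fun u => g u i) ustar (Pi.single j 1) with hadef
  set Alin : (Fin L → ℝ) →ₗ[ℝ] (Fin m → ℝ) := a.mulVecLin with hAdef
  have hAapp : ∀ q j, Alin q j = ∑ i, a j i * q i := fun q j => rfl
  have hfderiv_eq : ∀ (v : Fin L → ℝ) j,
      fderiv ℝ (fun u => ∑ i, g u i * v i) ustar (Pi.single j 1) = Alin v j := by
    intro v j
    rw [aux_fderiv g hgdiff v ustar (Pi.single j 1), hAapp]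
    exact Finset.sum_congr rfl fun i _ => by rw [hadef]; rfl
  set K : Set (Fin m → ℝ) := {y | ∀ j, (ustar j = uhi j → y j ≤ 0) ∧
      (ustar j = ulo j → 0 ≤ y j) ∧
      (ustar j ≠ uhi j → ustar j ≠ ulo j → y j = 0)} with hKdef
  have hKcl : IsClosed K := by
    have : K = ⋂ j, (fun y : Fin m → ℝ => y j) ⁻¹'
        {t : ℝ | (ustar j = uhi j → t ≤ 0) ∧ (ustar j = ulo j → 0 ≤ t) ∧
          (ustar j ≠ uhi j → ustar j ≠ ulo j → t = 0)} := by
      ext y; simp [hKdef, Set.mem_iInter]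
    rw [this]
    exact isClosed_iInter fun j => (aux_closedT _ _).preimage (continuous_apply j)
  have hKconv : Convex ℝ K := by
    intro y1 h1 y2 h2 s t hs ht hst
    intro j
    obtain ⟨h1a, h1b, h1c⟩ := h1 j
    obtain ⟨h2a, h2b, h2c⟩ := h2 j
    refine ⟨fun hj => ?_, fun hj => ?_, fun hj hj' => ?_⟩
    · have := h1a hj; have := h2a hj
      simp only [Pi.add_apply, Pi.smul_apply, smul_eq_mul]
      nlinarith
    · have := h1b hj; have := h2b hj
      simp only [Pi.add_apply, Pi.smul_apply, smul_eq_mul]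
      nlinarith
    · have := h1c hj hj'; have := h2c hj hj'
      simp only [Pi.add_apply, Pi.smul_apply, smul_eq_mul]
      nlinarith
  have hK0 : (0 : Fin m → ℝ) ∈ K := by intro j; simp
  have hKcone : ∀ t : ℝ, 0 < t → ∀ y ∈ K, t • y ∈ K := by
    intro t ht y hy j
    obtain ⟨ha, hb, hc⟩ := hy j
    refine ⟨fun hj => ?_, fun hj => ?_, fun hj hj' => ?_⟩
    · have := ha hj; simp only [Pi.smul_apply, smul_eq_mul]; nlinarith
    · have := hb hj; simp only [Pi.smul_apply, smul_eq_mul]; nlinarith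
    · have := hc hj hj'; simp only [Pi.smul_apply, smul_eq_mul, this, mul_zero]
  -- key claim
  have key : ∃ vstar ∈ M, Alin vstar ∈ K := by
    by_contra hno
    push_neg at hno
    have hdisj : Disjoint (Alin '' M) K := by
      rw [Set.disjoint_left]
      rintro y ⟨q, hqM, rfl⟩
      exact hno q hqM
    obtain ⟨d, ε, hε, hKd, hSd⟩ := aux_sep (hMconv.linear_image Alin)
      (hMcomp.image Alin.continuous_of_finiteDimensional) hKconv hKcl hK0 hKcone hdisj
    have hsingle_sum : ∀ (c : ℝ) (j : Fin m),
        ∑ j', (c • (Pi.single j 1 : Fin m → ℝ)) j' * d j' = c * d j := by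
      intro c j
      rw [Finset.sum_eq_single j]
      · simp
      · intro k _ hk; simp [Pi.single_apply, Ne.symm hk]
      · simp
    have hd_hi : ∀ j, ustar j = uhi j → d j ≤ 0 := by
      intro j hj
      have hmem : (-1 : ℝ) • (Pi.single j 1 : Fin m → ℝ) ∈ K := by
        intro j'
        by_cases hjj : j' = j
        · subst hjj
          exact ⟨fun _ => by simp, fun h => absurd (hj.symm.trans h)
            ((hbox j').ne'), fun h _ => absurd hj h⟩
        · simp [Pi.single_apply, Ne.symm hjj]
      have := hKd _ hmem
      rw [hsingle_sum] at this
      linarith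
    have hd_lo : ∀ j, ustar j = ulo j → 0 ≤ d j := by
      intro j hj
      have hmem : (1 : ℝ) • (Pi.single j 1 : Fin m → ℝ) ∈ K := by
        intro j'
        by_cases hjj : j' = j
        · subst hjj
          exact ⟨fun h => absurd (hj.symm.trans h) (ne_of_lt (hbox j')),
            fun _ => by simp, fun _ h => absurd hj h⟩
        · simp [Pi.single_apply, Ne.symm hjj]
      have := hKd _ hmem
      rw [hsingle_sum] at this
      linarith
    -- directional derivative vector
    set w : Fin L → ℝ := fun i => fderiv ℝ (fun u => g u i) ustar d with hwdef
    have hw : ∀ i, w i = ∑ j, d j * a j i := by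
      intro i
      exact clm_rep (fderiv ℝ (fun u => g u i) ustar) d
    set β : (Fin L → ℝ) → ℝ := fun q => ∑ i, w i * q i with hβdef
    have hβc : Continuous β :=
      continuous_finset_sum _ fun i _ => continuous_const.mul (continuous_apply i)
    have hβM : ∀ q ∈ M, β q ≤ -ε := by
      intro q hq
      have h1 := hSd (Alin q) ⟨q, hq, rfl⟩
      have h2 : ∑ j, Alin q j * d j = β q := by
        simp only [hβdef, hAapp]
        calc ∑ j, (∑ i, a j i * q i) * d j
            = ∑ j, ∑ i, a j i * q i * d j :=
              Finset.sum_congr rfl fun j _ => Finset.sum_mul _ _ _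
          _ = ∑ i, ∑ j, a j i * q i * d j := Finset.sum_comm
          _ = ∑ i, w i * q i := by
              refine Finset.sum_congr rfl fun i _ => ?_
              rw [hw i, Finset.sum_mul]
              exact Finset.sum_congr rfl fun j _ => by ring
      rw [h2] at h1
      exact h1
    -- uniform gap constant c
    have hcex : ∃ c : ℝ, 0 < c ∧ ∀ q ∈ P, -ε/2 ≤ β q → c ≤ f q0 - f q := by
      set Ks : Set (Fin L → ℝ) := {q | q ∈ P ∧ -ε/2 ≤ β q} with hKsdef
      by_cases hKs : Ks.Nonempty
      · have hKscomp : IsCompact Ks := by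
          have h3 : Ks = P ∩ β ⁻¹' (Set.Ici (-ε/2)) := by ext q; simp [hKsdef]
          rw [h3]
          exact hPcomp.inter_right (isClosed_Ici.preimage hβc)
        obtain ⟨qm, hqm, hqmin⟩ := hKscomp.exists_isMinOn hKs
          (f := fun q => f q0 - f q) (continuous_const.sub hfc).continuousOn
        refine ⟨f q0 - f qm, ?_, fun q hq hβq => hqmin (⟨hq, hβq⟩ : q ∈ Ks)⟩
        have h1 : f qm ≤ f q0 := hmax qm hqm.1
        rcases lt_or_eq_of_le h1 with h2 | h2
        · linarith
        · exfalso
          have hqmM : qm ∈ M := ⟨hqm.1, le_of_eq h2.symm⟩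
          have h4 := hβM qm hqmM
          have h5 := hqm.2
          linarith
      · exact ⟨1, one_pos, fun q hq hβq => (hKs ⟨q, hq, hβq⟩).elim⟩
    obtain ⟨c, hc, hcP⟩ := hcex
    set W : ℝ := ∑ i, |w i| with hWdef
    have hβW : ∀ q ∈ P, β q ≤ W := by
      intro q hq
      obtain ⟨hq1, hq2⟩ := hPsub hq
      have hqle1 : ∀ i, q i ≤ 1 := by
        intro i
        rw [← hq2]
        exact Finset.single_le_sum (fun k _ => hq1 k) (Finset.mem_univ i)
      refine Finset.sum_le_sum fun i _ => ?_
      calc w i * q i ≤ |w i| * q i :=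
            mul_le_mul_of_nonneg_right (le_abs_self _) (hq1 i)
        _ ≤ |w i| * 1 := mul_le_mul_of_nonneg_left (hqle1 i) (abs_nonneg _)
        _ = |w i| := mul_one _
    -- derivative limit
    have hderiv : ∀ i, HasDerivAt (fun t : ℝ => g (ustar + t • d) i) (w i) 0 := by
      intro i
      have hline : HasDerivAt (fun t : ℝ => ustar + t • d) d 0 := by
        have h1 : HasDerivAt (fun t : ℝ => t • d) ((1:ℝ) • d) 0 :=
          (hasDerivAt_id 0).smul_const d
        rw [one_smul] at h1
        exact h1.const_add ustar
      have h2 := ((hgdiff i).differentiableAt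
        (x := ustar + (0:ℝ) • d)).hasFDerivAt.comp_hasDerivAt 0 hline
      simp only [zero_smul, add_zero] at h2
      exact h2
    have hslope : ∀ i, Tendsto (fun t : ℝ => (g (ustar + t • d) i - g ustar i) / t)
        (𝓝[>] 0) (𝓝 (w i)) := by
      intro i
      have hsub : Set.Ioi (0:ℝ) ⊆ {(0:ℝ)}ᶜ := fun t ht => by
        simpa using ne_of_gt ht
      have h1 := (hasDerivAt_iff_tendsto_slope.mp (hderiv i)).mono_left
        (nhdsWithin_mono 0 hsub)
      have h2 : ∀ t : ℝ, slope (fun t : ℝ => g (ustar + t • d) i) 0 t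
          = (g (ustar + t • d) i - g ustar i) / t := by
        intro t
        simp [slope_def_field]
      exact h1.congr h2
    have E1 : ∀ᶠ t in 𝓝[>] (0:ℝ),
        ∀ i, |g (ustar + t • d) i - g ustar i - t * w i| ≤ t * (ε/4) := by
      rw [eventually_all]
      intro i
      have h1 : ∀ᶠ t in 𝓝[>] (0:ℝ),
          |(g (ustar + t • d) i - g ustar i) / t - w i| < ε/4 :=
        (hslope i).eventually (eventually_abs_sub_lt (w i) (by linarith : (0:ℝ) < ε/4))
      filter_upwards [h1, self_mem_nhdsWithin] with t ht htpos
      have htpos' : (0:ℝ) < t := htpos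
      have htne : t ≠ 0 := ne_of_gt htpos'
      have h2 : g (ustar + t • d) i - g ustar i - t * w i
          = t * ((g (ustar + t • d) i - g ustar i) / t - w i) := by
        field_simp
      rw [h2, abs_mul, abs_of_pos htpos']
      exact mul_le_mul_of_nonneg_left (le_of_lt ht) (le_of_lt htpos')
    have E2 : ∀ᶠ t in 𝓝[>] (0:ℝ), ustar + t • d ∈ U := by
      rw [hU] at hustar ⊢
      simp only [Set.mem_setOf_eq]
      rw [eventually_all]
      intro j
      obtain ⟨hlo, hhi⟩ := hustar j
      have htend : Tendsto (fun t : ℝ => ustar j + t * d j) (𝓝[>] 0) (𝓝 (ustar j)) := by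
        have hcont : Continuous (fun t : ℝ => ustar j + t * d j) :=
          continuous_const.add (continuous_id.mul continuous_const)
        have h1 := hcont.tendsto 0
        simp only [zero_mul, add_zero] at h1
        exact h1.mono_left nhdsWithin_le_nhds
      have hlow : ∀ᶠ t in 𝓝[>] (0:ℝ), ulo j ≤ ustar j + t * d j := by
        by_cases hj : ustar j = ulo j
        · have hdj := hd_lo j hj
          filter_upwards [self_mem_nhdsWithin] with t ht
          have h3 : (0:ℝ) < t := ht
          nlinarith
        · have hstrict : ulo j < ustar j := lt_of_le_of_ne hlo (Ne.symm hj)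
          exact (htend.eventually (eventually_gt_nhds hstrict)).mono fun t ht => le_of_lt ht
      have hhigh : ∀ᶠ t in 𝓝[>] (0:ℝ), ustar j + t * d j ≤ uhi j := by
        by_cases hj : ustar j = uhi j
        · have hdj := hd_hi j hj
          filter_upwards [self_mem_nhdsWithin] with t ht
          have h3 : (0:ℝ) < t := ht
          nlinarith
        · have hstrict : ustar j < uhi j := lt_of_le_of_ne hhi hj
          exact (htend.eventually (eventually_lt_nhds hstrict)).mono fun t ht => le_of_lt ht
      filter_upwards [hlow, hhigh] with t h1 h2
      simpa using ⟨h1, h2⟩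
    have E3 : ∀ᶠ t in 𝓝[>] (0:ℝ), t * (W + ε/4) ≤ c/2 := by
      have h1 : Tendsto (fun t : ℝ => t * (W + ε/4)) (𝓝[>] 0) (𝓝 0) := by
        have hcont : Continuous (fun t : ℝ => t * (W + ε/4)) :=
          continuous_id.mul continuous_const
        have h2 := hcont.tendsto 0
        simp only [zero_mul] at h2
        exact h2.mono_left nhdsWithin_le_nhds
      exact (h1.eventually (eventually_lt_nhds (by positivity : (0:ℝ) < c/2))).mono
        fun t ht => le_of_lt ht
    obtain ⟨t, ⟨ht1, ht2, ht3⟩, ht0'⟩ := ((E1.and (E2.and E3)).and self_mem_nhdsWithin).exists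
    have ht0 : (0:ℝ) < t := ht0'
    set μ : ℝ := min (t * (ε/4)) (c/2) with hμdef
    have hμpos : 0 < μ := lt_min (by positivity) (by positivity)
    have hub : ∀ q ∈ P, ∑ i, g (ustar + t • d) i * q i ≤ f q0 - μ := by
      intro q hq
      obtain ⟨hq1, hq2⟩ := hPsub hq
      have hsplit : ∑ i, g (ustar + t • d) i * q i
          = f q + (∑ i, (g (ustar + t • d) i - g ustar i - t * w i) * q i) + t * β q := by
        simp only [hfdef, hβdef, Finset.mul_sum]
        rw [← Finset.sum_add_distrib, ← Finset.sum_add_distrib]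
        exact Finset.sum_congr rfl fun i _ => by ring
      have hmid : ∑ i, (g (ustar + t • d) i - g ustar i - t * w i) * q i ≤ t * (ε/4) := by
        calc ∑ i, (g (ustar + t • d) i - g ustar i - t * w i) * q i
            ≤ ∑ i, (t * (ε/4)) * q i := by
              refine Finset.sum_le_sum fun i _ => ?_
              calc (g (ustar + t • d) i - g ustar i - t * w i) * q i
                  ≤ |g (ustar + t • d) i - g ustar i - t * w i| * q i :=
                    mul_le_mul_of_nonneg_right (le_abs_self _) (hq1 i)
                _ ≤ (t * (ε/4)) * q i := mul_le_mul_of_nonneg_right (ht1 i) (hq1 i)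
          _ = (t * (ε/4)) * ∑ i, q i := (Finset.mul_sum _ _ _).symm
          _ = t * (ε/4) := by rw [hq2, mul_one]
      by_cases hcase : β q ≤ -ε/2
      · have hβt : t * β q ≤ t * (-ε/2) :=
          mul_le_mul_of_nonneg_left hcase (le_of_lt ht0)
        have hfq : f q ≤ f q0 := hmax q hq
        have hmin : μ ≤ t * (ε/4) := min_le_left _ _
        have hrel : t * (-ε/2) = -(t * (ε/4)) - (t * (ε/4)) := by ring
        rw [hsplit]
        linarith
      · push_neg at hcase
        have hgap := hcP q hq (le_of_lt hcase)
        have hβt : t * β q ≤ t * W := mul_le_mul_of_nonneg_left (hβW q hq) (le_of_lt ht0)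
        have hmin : μ ≤ c/2 := min_le_right _ _
        have hrel : t * (ε/4) + t * W = t * (W + ε/4) := by ring
        rw [hsplit]
        linarith
    have hφt : φ (ustar + t • d) ≤ f q0 - μ := by
      rw [hφ]
      refine csSup_le ⟨_, q0, hq0P, rfl⟩ ?_
      rintro x ⟨q, hq, rfl⟩
      exact hub q hq
    have hcontr := hopt _ ht2
    rw [hφu] at hcontr
    linarith
  -- conclude
  obtain ⟨vstar, hvM, hvK⟩ := key
  have hstatv : statConstraints vstar := by
    rw [hstat]
    refine ⟨fun j hj => ?_, fun j hj => ?_, fun j hj hj' => ?_⟩ <;> rw [hfderiv_eq]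
    · exact (hvK j).1 hj
    · exact (hvK j).2.1 hj
    · exact (hvK j).2.2 hj hj'
  have hvQ : vstar ∈ Q := hPQ hvM.1
  have hbdd2 : BddAbove {x : ℝ | ∃ v ∈ Q, statConstraints v ∧ x = f v} := by
    apply BddAbove.mono ?_ (hQcomp.image hfc).bddAbove
    rintro x ⟨v, hv, _, rfl⟩
    exact ⟨v, hv, rfl⟩
  refine ⟨⟨vstar, hvQ, hstatv⟩, ?_, ?_⟩
  · intro q hq
    rw [hτ'']
    calc f q ≤ f q0 := hmax q hq
      _ ≤ f vstar := hvM.2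
      _ ≤ sSup {x : ℝ | ∃ v ∈ Q, statConstraints v ∧ x = f v} :=
          le_csSup hbdd2 ⟨vstar, hvQ, hstatv, rfl⟩
  · rw [hτ'', hτ']
    apply csSup_le_csSup
    · apply BddAbove.mono ?_ (((isCompact_stdSimplex ℝ (Fin L)).image hfc).bddAbove)
      rintro x ⟨v, hv, _, rfl⟩
      exact ⟨v, hv, rfl⟩
    · exact ⟨f vstar, vstar, hvQ, hstatv, rfl⟩
    · rintro x ⟨v, hv, hs, rfl⟩
      exact ⟨v, hQsub hv, hs, rfl⟩
end

section
/- (KKT conditions for the multi-step risk-sensitive planning problem with scenario-decoupled react controls.) Let F : ℝ^{a} → ℝ be a convex differentiable prepare-phase cost of the prepare control vector u ∈ ℝ^{a}, and for each scenario j = 1, …, L let g_j : ℝ^{a} × ℝ^{b} → ℝ be a convex differentiable tail cost depending on u and on the react control vector r_j ∈ ℝ^{b} of scenario j only. Let all controls be constrained to nondegenerate boxes: u ∈ B₀ = {u : u⁻ ≤ u ≤ u⁺} and r_j ∈ B_j = {r : r⁻ ≤ r ≤ r⁺} componentwise, with strict inequality between lower and upper bounds. Let P be a nonempty compact convex subset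 of Δ^L, and suppose (u*, r₁*, …, r_L*) minimizes F(u) + max_{q ∈ P} Σ_j q(j)·g_j(u, r_j) over B₀ × B₁ × ⋯ × B_L. Then there exists v̄ ∈ P attaining the inner maximum at the optimum, i.e., Σ_j v̄(j)·g_j(u*, r_j*) = max_{q ∈ P} Σ_j q(j)·g_j(u*, r_j*), such that: for every prepare component i, ∂_{u(i)}[F(u) + Σ_j v̄(j) g_j(u, r_j*)]|_{u*} ≤ 0 if u*(i) is at its upper bound, ≥ 0 if at its lower bound, and = 0 otherwise; and for every scenario j and every react component i, v̄(j)·∂_{r_j(i)} g_j(u*, r_j)|_{r_j*} ≤ 0 if r_j*(i) is at its upper bound, ≥ 0 if at its lower bound, and = 0 otherwise. -/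
/-!
Call a weight `v ∈ P` active if it attains the worst case at the optimum. If no active `v`
satisfied the sign conditions, the gradients of `F + E_v[g]` over the active `v` (a compact convex
set, being an affine image of one) could be strictly separated from the closed convex cone of
admissible sign patterns, and the separating functional would be a feasible direction `y` of the
box along which every active gradient strictly decreases. But the worst-case weights at
`x* + t y`, `t ↓ 0`, accumulate by compactness of `P` at an active weight whose slope along `y` is
nonnegative, since the objective does not decrease along `y` and the costs are convex in `t`.
-/

open Set Filter Topology

/-- The values a partial derivative may take at coordinate `x` of a box edge `[lo, hi]` under the
KKT sign conditions: the dual of the cone of feasible directions at `x`. -/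
def kktCone (lo hi x : ℝ) : PointedCone ℝ ℝ where
  carrier := {d | (x = hi → d ≤ 0) ∧ (x = lo → 0 ≤ d) ∧ (x ≠ hi → x ≠ lo → d = 0)}
  add_mem' {d d'} hd hd' :=
    ⟨fun h => add_nonpos (hd.1 h) (hd'.1 h), fun h => add_nonneg (hd.2.1 h) (hd'.2.1 h),
      fun h h' => by rw [hd.2.2 h h', hd'.2.2 h h', add_zero]⟩
  zero_mem' := by simp
  smul_mem' c d hd :=
    ⟨fun h => mul_nonpos_of_nonneg_of_nonpos c.2 (hd.1 h),
      fun h => mul_nonneg c.2 (hd.2.1 h), fun h h' => by simp [hd.2.2 h h']⟩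

@[simp]
theorem mem_kktCone {lo hi x d : ℝ} :
    d ∈ kktCone lo hi x ↔ (x = hi → d ≤ 0) ∧ (x = lo → 0 ≤ d) ∧ (x ≠ hi → x ≠ lo → d = 0) :=
  Iff.rfl

theorem isClosed_kktCone (lo hi x : ℝ) : IsClosed (kktCone lo hi x : Set ℝ) := by
  have imp : ∀ (p : Prop) (s : Set ℝ), IsClosed s → IsClosed {d | p → d ∈ s} := by
    intro p s hs; by_cases hp : p <;> simp [hp, hs]
  exact (imp _ _ isClosed_Iic).inter ((imp _ _ isClosed_Ici).inter
    (imp _ _ (imp _ _ isClosed_singleton)))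

theorem eventually_le_add_mul {lo x y : ℝ} (hx : lo ≤ x) (hy : x = lo → 0 ≤ y) :
    ∀ᶠ t in 𝓝[>] 0, lo ≤ x + t * y := by
  rcases hx.eq_or_lt with rfl | hlt
  · filter_upwards [self_mem_nhdsWithin] with t ht
    nlinarith [hy rfl, mem_Ioi.1 ht]
  · have : Tendsto (fun t : ℝ => x + t * y) (𝓝 0) (𝓝 x) :=
      (by fun_prop : Continuous fun t : ℝ => x + t * y).tendsto' 0 x (by simp)
    exact (this.eventually (eventually_ge_nhds hlt)).filter_mono nhdsWithin_le_nhds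

theorem eventually_add_mul_mem_Icc {lo hi x y : ℝ} (hlh : lo < hi) (hx : x ∈ Icc lo hi)
    (hy : ∀ z ∈ kktCone lo hi x, 0 ≤ z * y) : ∀ᶠ t in 𝓝[>] 0, x + t * y ∈ Icc lo hi := by
  have hup : x = hi → y ≤ 0 := fun h => by
    have := hy (-1) (by simp [h, hlh.ne']); linarith
  have hdown : x = lo → 0 ≤ y := fun h => by
    have := hy 1 (by simp [h, hlh.ne]); linarith
  filter_upwards [eventually_le_add_mul hx.1 hdown,
    eventually_le_add_mul (neg_le_neg hx.2) (fun h => neg_nonneg.2 (hup (neg_inj.1 h)))]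
    with t hlo hhi
  exact ⟨hlo, by linarith⟩

theorem inter_nonempty_of_forall_exists_nonneg {W : Type*} [TopologicalSpace W] [AddCommGroup W]
    [Module ℝ W] [IsTopologicalAddGroup W] [ContinuousSMul ℝ W] [LocallyConvexSpace ℝ W]
    {G : Set W} (hGconv : Convex ℝ G) (hGcomp : IsCompact G) (Q : PointedCone ℝ W)
    (hQ : IsClosed (Q : Set W))
    (h : ∀ f : W →L[ℝ] ℝ, (∀ q ∈ Q, 0 ≤ f q) → ∃ g ∈ G, 0 ≤ f g) : (G ∩ Q).Nonempty := by
  by_contra hdisj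
  obtain ⟨f, u, v, hfG, huv, hfQ⟩ := geometric_hahn_banach_compact_closed hGconv hGcomp
    Q.convex hQ (disjoint_iff_inter_eq_empty.2 (not_nonempty_iff_eq_empty.1 hdisj))
  have hv : v < 0 := by simpa using hfQ 0 Q.zero_mem
  -- `f` is bounded below on the cone `Q`, hence nonnegative on it
  have hfQ_nonneg : ∀ q ∈ Q, 0 ≤ f q := by
    intro q hq
    by_contra! hneg
    have := hfQ _ (Q.smul_mem (div_nonneg_of_nonpos hv.le hneg.le) hq)
    simp [div_mul_cancel₀ _ hneg.ne] at this
  obtain ⟨g, hg, hfg⟩ := h f hfQ_nonneg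
  linarith [hfG g hg]

theorem exists_forall_mem_of_forall_exists_dotProduct_nonneg {ι : Type*} [Fintype ι]
    [DecidableEq ι] {G : Set (ι → ℝ)} (hGconv : Convex ℝ G) (hGcomp : IsCompact G)
    (K : ι → PointedCone ℝ ℝ) (hK : ∀ k, IsClosed (K k : Set ℝ))
    (h : ∀ d : ι → ℝ, (∀ k, ∀ z ∈ K k, 0 ≤ z * d k) → ∃ g ∈ G, 0 ≤ g ⬝ᵥ d) :
    ∃ g ∈ G, ∀ k, g k ∈ K k := by
  have hQ : IsClosed (Submodule.pi univ K : Set (ι → ℝ)) := by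
    simpa [Submodule.coe_pi] using isClosed_set_pi fun k _ => hK k
  obtain ⟨g, hg, hgQ⟩ := inter_nonempty_of_forall_exists_nonneg hGconv hGcomp _ hQ fun f hf => by
    have hsingle : ∀ k z, f (Pi.single k z) = z * f (Pi.single k 1) := fun k z => by
      rw [← smul_eq_mul, ← map_smul, ← Pi.single_smul, smul_eq_mul, mul_one]
    obtain ⟨g, hg, hgd⟩ := h (fun k => f (Pi.single k 1)) fun k z hz => by
      rw [← hsingle]
      refine hf _ (Submodule.mem_pi.2 fun k' _ => ?_)
      rcases eq_or_ne k' k with rfl | hk <;> simp [*, Pi.single_eq_of_ne]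
    refine ⟨g, hg, ?_⟩
    rwa [← Finset.univ_sum_single g, map_sum, Finset.sum_congr rfl fun k _ => hsingle k (g k)]
  exact ⟨g, hg, fun k => Submodule.mem_pi.1 hgQ k trivial⟩

theorem convexOn_sum {E ι : Type*} [AddCommGroup E] [Module ℝ E] {s : Set E} (hs : Convex ℝ s)
    {t : Finset ι} {f : ι → E → ℝ} (hf : ∀ j ∈ t, ConvexOn ℝ s (f j)) :
    ConvexOn ℝ s (fun x => ∑ j ∈ t, f j x) := by
  simpa only [← Finset.sum_apply] using
    Finset.sum_induction f (ConvexOn ℝ s) (fun _ _ => ConvexOn.add) (convexOn_const 0 hs) hf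

theorem ConvexOn.comp_add_smul {E : Type*} [AddCommGroup E] [Module ℝ E] {f : E → ℝ}
    (hf : ConvexOn ℝ univ f) (x y : E) : ConvexOn ℝ univ (fun t : ℝ => f (x + t • y)) :=
  (hf.translate_right x).comp_linearMap (LinearMap.toSpanSingleton ℝ E y)

theorem HasDerivAt.apply_zero_eq_and_nonneg {φ : ℝ → ℝ} {d c : ℝ} (hφ : HasDerivAt φ d 0)
    (h0 : φ 0 ≤ c) (hc : ∀ᶠ s in 𝓝[>] 0, c ≤ φ s) : φ 0 = c ∧ 0 ≤ d := by
  have heq : φ 0 = c :=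
    le_antisymm h0 (ge_of_tendsto (hφ.continuousAt.tendsto.mono_left nhdsWithin_le_nhds) hc)
  refine ⟨heq, ge_of_tendsto ((hasDerivAt_iff_tendsto_slope.1 hφ).mono_left
    (nhdsWithin_mono 0 fun s (hs : s ∈ Ioi 0) => ne_of_gt hs)) ?_⟩
  filter_upwards [hc, self_mem_nhdsWithin] with s hs hpos
  rw [slope_def_field, heq, sub_zero]
  exact div_nonneg (sub_nonneg.2 hs) (le_of_lt hpos)

theorem exists_mem_eventually_le_of_convexOn {Λ : Type*} [TopologicalSpace Λ] [T2Space Λ]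
    {P : Set Λ} (hP : IsCompact P) {ψ : Λ → ℝ → ℝ} {c : ℝ} (hconv : ∀ q ∈ P, ConvexOn ℝ univ (ψ q))
    (h0 : ∀ q ∈ P, ψ q 0 ≤ c) (hcont : ∀ s, Continuous fun q => ψ q s)
    (hex : ∀ᶠ s in 𝓝[>] 0, ∃ q ∈ P, c ≤ ψ q s) : ∃ q ∈ P, ∀ᶠ s in 𝓝[>] 0, c ≤ ψ q s := by
  obtain ⟨t₀, ht₀, hex⟩ := (nhdsGT_basis 0).eventually_iff.1 hex
  -- by convexity and `ψ q 0 ≤ c`, the compact sets `{q ∈ P | c ≤ ψ q s}` shrink as `s ↓ 0`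
  have mono : ∀ q ∈ P, ∀ s s', 0 < s → s ≤ s' → c ≤ ψ q s → c ≤ ψ q s' := by
    intro q hq s s' hs hss hc
    have hs' := hs.trans_le hss
    have hcomb : (1 - s / s') • (0 : ℝ) + (s / s') • s' = s := by
      simp [div_mul_cancel₀ _ hs'.ne']
    have := (hconv q hq).le_right_of_left_le' trivial trivial
      (sub_nonneg.2 ((div_le_one hs').2 hss)) (div_pos hs hs') (by ring)
      (hcomb ▸ (h0 q hq).trans hc)
    rw [hcomb] at this
    exact hc.trans this
  let Z : Ioo 0 t₀ → Set Λ := fun s => {q ∈ P | c ≤ ψ q s}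
  have hZclosed : ∀ s, IsClosed (Z s) := fun s =>
    hP.isClosed.inter (isClosed_le continuous_const (hcont s))
  have : Nonempty (Ioo 0 t₀) := ⟨⟨t₀ / 2, half_pos ht₀, half_lt_self ht₀⟩⟩
  obtain ⟨q, hq⟩ := IsCompact.nonempty_iInter_of_directed_nonempty_isCompact_isClosed Z
    (fun s₁ s₂ => ⟨⟨min s₁ s₂, lt_min s₁.2.1 s₂.2.1, (min_le_left _ _).trans_lt s₁.2.2⟩,
      fun q hq => ⟨hq.1, mono q hq.1 _ _ (lt_min s₁.2.1 s₂.2.1) (min_le_left _ _) hq.2⟩,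
      fun q hq => ⟨hq.1, mono q hq.1 _ _ (lt_min s₁.2.1 s₂.2.1) (min_le_right _ _) hq.2⟩⟩)
    (fun s => hex s.2) (fun s => hP.of_isClosed_subset (hZclosed s) inter_subset_left)
    hZclosed
  rw [mem_iInter] at hq
  exact ⟨q, (hq (Classical.arbitrary _)).1,
    (nhdsGT_basis 0).eventually_iff.2 ⟨t₀, ht₀, fun s hs => (hq ⟨s, hs⟩).2⟩⟩

section ExpectedCost

variable {X κ : Type*} [Fintype κ]

def expectedCost (F : X → ℝ) (h : κ → X → ℝ) (q : κ → ℝ) (x : X) : ℝ :=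
  F x + ∑ j, q j * h j x

/-- The coherent risk measure `max_{q ∈ P} E_q[z]`; the supremum is attained when `P` is compact
and nonempty (for empty `P` it is the junk value `sSup ∅ = 0`). -/
noncomputable def coherentRisk (P : Set (κ → ℝ)) (z : κ → ℝ) : ℝ :=
  sSup ((· ⬝ᵥ z) '' P)

theorem dotProduct_le_coherentRisk {P : Set (κ → ℝ)} (hP : IsCompact P) (z : κ → ℝ)
    {q : κ → ℝ} (hq : q ∈ P) : q ⬝ᵥ z ≤ coherentRisk P z :=
  le_csSup ((hP.image (by fun_prop)).bddAbove) (mem_image_of_mem _ hq)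

theorem exists_dotProduct_eq_coherentRisk {P : Set (κ → ℝ)} (hP : IsCompact P)
    (hPne : P.Nonempty) (z : κ → ℝ) : ∃ q ∈ P, q ⬝ᵥ z = coherentRisk P z :=
  (hP.image (by fun_prop : Continuous (· ⬝ᵥ z))).sSup_mem (hPne.image _)

theorem coherentRisk_eq_sSup (P : Set (κ → ℝ)) (z : κ → ℝ) :
    coherentRisk P z = sSup {t | ∃ q ∈ P, t = ∑ j, q j * z j} := by
  simp only [coherentRisk, dotProduct, image, eq_comm]

variable [AddCommGroup X] [Module ℝ X] {F : X → ℝ} {h : κ → X → ℝ}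

theorem convexOn_expectedCost (hF : ConvexOn ℝ univ F) (hh : ∀ j, ConvexOn ℝ univ (h j))
    {q : κ → ℝ} (hq : 0 ≤ q) : ConvexOn ℝ univ (expectedCost F h q) :=
  hF.add (convexOn_sum convex_univ fun j _ => by simpa using (hh j).smul (hq j))

end ExpectedCost

section FirstOrder

variable {X κ : Type*} [Fintype κ] [NormedAddCommGroup X] [NormedSpace ℝ X] {F : X → ℝ}
  {h : κ → X → ℝ} {x : X}

theorem hasFDerivAt_expectedCost (hF : DifferentiableAt ℝ F x)
    (hh : ∀ j, DifferentiableAt ℝ (h j) x) (q : κ → ℝ) :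
    HasFDerivAt (expectedCost F h q) (fderiv ℝ F x + ∑ j, q j • fderiv ℝ (h j) x) x :=
  hF.hasFDerivAt.add (HasFDerivAt.fun_sum fun j _ => (hh j).hasFDerivAt.const_mul (q j))

theorem exists_active_fderiv_nonneg {P : Set (κ → ℝ)} (hF : ConvexOn ℝ univ F)
    (hh : ∀ j, ConvexOn ℝ univ (h j)) (hFx : DifferentiableAt ℝ F x)
    (hhx : ∀ j, DifferentiableAt ℝ (h j) x) (hPc : IsCompact P) (hPne : P.Nonempty)
    (hP0 : ∀ q ∈ P, 0 ≤ q) (y : X)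
    (hdesc : ∀ᶠ t in 𝓝[>] (0 : ℝ), F x + coherentRisk P (fun j => h j x) ≤
      F (x + t • y) + coherentRisk P (fun j => h j (x + t • y))) :
    ∃ v ∈ P, v ⬝ᵥ (fun j => h j x) = coherentRisk P (fun j => h j x) ∧
      0 ≤ fderiv ℝ (expectedCost F h v) x y := by
  have hattain : ∀ᶠ t in 𝓝[>] (0 : ℝ), ∃ q ∈ P,
      F x + coherentRisk P (fun j => h j x) ≤ expectedCost F h q (x + t • y) := by
    filter_upwards [hdesc] with t ht
    obtain ⟨q, hq, hqe⟩ := exists_dotProduct_eq_coherentRisk hPc hPne fun j => h j (x + t • y)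
    exact ⟨q, hq, ht.trans_eq (by rw [← hqe]; rfl)⟩
  have hle : ∀ q ∈ P, expectedCost F h q x ≤ F x + coherentRisk P (fun j => h j x) :=
    fun q hq => add_le_add_right (dotProduct_le_coherentRisk hPc _ hq) _
  obtain ⟨v, hvP, hv⟩ := exists_mem_eventually_le_of_convexOn hPc
    (ψ := fun q t => expectedCost F h q (x + t • y))
    (fun q hq => (convexOn_expectedCost hF hh (hP0 q hq)).comp_add_smul x y)
    (fun q hq => by simpa using hle q hq) (fun s => by unfold expectedCost; fun_prop) hattain
  have hline : HasDerivAt (fun t : ℝ => x + t • y) y 0 := by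
    simpa using ((hasDerivAt_id (0 : ℝ)).smul_const y).const_add x
  obtain ⟨hact, hnn⟩ := HasDerivAt.apply_zero_eq_and_nonneg
    ((hasFDerivAt_expectedCost hFx hhx v).differentiableAt.hasFDerivAt.comp_hasDerivAt_of_eq 0
      hline (by simp))
    (by simpa using hle v hvP) hv
  refine ⟨v, hvP, ?_, hnn⟩
  simpa [expectedCost, dotProduct] using hact

theorem exists_kkt_of_isMinOn_box {ι : Type*} [Fintype ι] [DecidableEq ι]
    (e : Module.Basis ι ℝ X) {lo hi : ι → ℝ} (hlohi : ∀ k, lo k < hi k) {P : Set (κ → ℝ)}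
    (hF : ConvexOn ℝ univ F) (hh : ∀ j, ConvexOn ℝ univ (h j)) (hFx : DifferentiableAt ℝ F x)
    (hhx : ∀ j, DifferentiableAt ℝ (h j) x) (hPc : IsCompact P) (hPne : P.Nonempty)
    (hPconv : Convex ℝ P) (hP0 : ∀ q ∈ P, 0 ≤ q) (hx : ∀ k, e.repr x k ∈ Icc (lo k) (hi k))
    (hmin : IsMinOn (fun x => F x + coherentRisk P fun j => h j x)
      {x | ∀ k, e.repr x k ∈ Icc (lo k) (hi k)} x) :
    ∃ v ∈ P, v ⬝ᵥ (fun j => h j x) = coherentRisk P (fun j => h j x) ∧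
      ∀ k, fderiv ℝ (expectedCost F h v) x (e k) ∈ kktCone (lo k) (hi k) (e.repr x k) := by
  set M := {v ∈ P | v ⬝ᵥ (fun j => h j x) = coherentRisk P (fun j => h j x)}
  have hMc : IsCompact M := hPc.of_isClosed_subset
    (hPc.isClosed.inter (isClosed_eq (by fun_prop) continuous_const)) inter_subset_left
  have hMconv : Convex ℝ M := hPconv.inter
    (convex_hyperplane ⟨fun v w => add_dotProduct v w _, fun c v => smul_dotProduct c v _⟩ _)
  let c : (κ → ℝ) →ᵃ[ℝ] (ι → ℝ) :=
    (Fintype.linearCombination ℝ fun j k => fderiv ℝ (h j) x (e k)).toAffineMap +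
      AffineMap.const ℝ (κ → ℝ) fun k => fderiv ℝ F x (e k)
  have hc : ∀ v k, c v k = fderiv ℝ (expectedCost F h v) x (e k) := by
    intro v k
    simp [c, (hasFDerivAt_expectedCost hFx hhx v).fderiv, Fintype.linearCombination_apply,
      add_comm]
  have hdual : ∀ d : ι → ℝ, (∀ k, ∀ z ∈ kktCone (lo k) (hi k) (e.repr x k), 0 ≤ z * d k) →
      ∃ g ∈ c '' M, 0 ≤ g ⬝ᵥ d := by
    intro d hd
    have hrepr : ∀ t : ℝ, ∀ k, e.repr (x + t • ∑ k, d k • e k) k = e.repr x k + t * d k := by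
      simp only [map_add, map_smul, Finsupp.add_apply, Finsupp.smul_apply, e.repr_sum_self,
        smul_eq_mul, implies_true]
    have hfeas : ∀ᶠ t in 𝓝[>] (0 : ℝ),
        ∀ k, e.repr (x + t • ∑ k, d k • e k) k ∈ Icc (lo k) (hi k) := by
      simp only [hrepr]
      exact eventually_all.2 fun k => eventually_add_mul_mem_Icc (hlohi k) (hx k) (hd k)
    obtain ⟨v, hvP, hvact, hvy⟩ := exists_active_fderiv_nonneg hF hh hFx hhx hPc hPne hP0 _
      (hfeas.mono fun t ht => hmin ht)
    refine ⟨c v, ⟨v, ⟨hvP, hvact⟩, rfl⟩, ?_⟩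
    simpa [hc, dotProduct, mul_comm] using hvy
  obtain ⟨_, ⟨v, ⟨hvP, hvact⟩, rfl⟩, hvK⟩ := exists_forall_mem_of_forall_exists_dotProduct_nonneg
    (hMconv.affine_image c) (hMc.image c.continuous_of_finiteDimensional)
    (fun k => kktCone (lo k) (hi k) (e.repr x k)) (fun k => isClosed_kktCone _ _ _) hdual
  exact ⟨v, hvP, hvact, fun k => hc v k ▸ hvK k⟩

end FirstOrder

section Partial

variable {E E' G : Type*} [NormedAddCommGroup E] [NormedSpace ℝ E] [NormedAddCommGroup E']
  [NormedSpace ℝ E'] [NormedAddCommGroup G] [NormedSpace ℝ G]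

theorem fderiv_apply_prod_zero {f : E × E' → G} {x : E} {y : E'}
    (hf : DifferentiableAt ℝ f (x, y)) (w : E) :
    fderiv ℝ f (x, y) (w, 0) = fderiv ℝ (fun u => f (u, y)) x w := by
  have := (hf.hasFDerivAt.comp x (hasFDerivAt_prodMk_left (𝕜 := ℝ) x y)).fderiv
  exact (DFunLike.congr_fun this w).symm

theorem fderiv_apply_zero_prod {f : E × E' → G} {x : E} {y : E'}
    (hf : DifferentiableAt ℝ f (x, y)) (w : E') :
    fderiv ℝ f (x, y) (0, w) = fderiv ℝ (fun r => f (x, r)) y w := by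
  have := (hf.hasFDerivAt.comp y (hasFDerivAt_prodMk_right x y)).fderiv
  exact (DFunLike.congr_fun this w).symm

theorem fderiv_comp_apply_eval {κ : Type*} [Fintype κ] {φ : E' → G} {r : κ → E'} {j : κ}
    (hφ : DifferentiableAt ℝ φ (r j)) (δ : κ → E') :
    fderiv ℝ (fun r' => φ (r' j)) r δ = fderiv ℝ φ (r j) (δ j) := by
  have := (hφ.hasFDerivAt.comp r (hasFDerivAt_apply (𝕜 := ℝ) j r)).fderiv
  exact DFunLike.congr_fun this δ

end Partial

section Decoupled

variable {E E' κ : Type*} [NormedAddCommGroup E] [NormedSpace ℝ E] [NormedAddCommGroup E']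
  [NormedSpace ℝ E'] [Fintype κ] {F : E → ℝ} {g : κ → E → E' → ℝ} {u : E} {r : κ → E'}

theorem DifferentiableAt.comp_fst_eval_snd {j : κ}
    (hg : DifferentiableAt ℝ (fun p : E × E' => g j p.1 p.2) (u, r j)) :
    DifferentiableAt ℝ (fun p : E × (κ → E') => g j p.1 (p.2 j)) (u, r) :=
  hg.comp (f := fun p : E × (κ → E') => (p.1, p.2 j)) (u, r) (by fun_prop)

theorem fderiv_expectedCost_apply_zero_single [DecidableEq κ] (hF : DifferentiableAt ℝ F u)
    (hg : ∀ j, DifferentiableAt ℝ (fun p : E × E' => g j p.1 p.2) (u, r j)) (v : κ → ℝ) (j : κ)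
    (w : E') :
    fderiv ℝ (expectedCost (fun p : E × (κ → E') => F p.1) (fun j p => g j p.1 (p.2 j)) v) (u, r)
      (0, Pi.single j w) = v j * fderiv ℝ (g j u) (r j) w := by
  have hFp : DifferentiableAt ℝ (fun p : E × (κ → E') => F p.1) (u, r) :=
    hF.comp (u, r) differentiableAt_fst
  have hFzero : fderiv ℝ (fun p : E × (κ → E') => F p.1) (u, r) (0, Pi.single j w) = 0 := by
    rw [fderiv_apply_zero_prod hFp]; simp
  have hgj : ∀ j', fderiv ℝ (fun p : E × (κ → E') => g j' p.1 (p.2 j')) (u, r) (0, Pi.single j w)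
      = fderiv ℝ (g j' u) (r j') ((Pi.single j w : κ → E') j') := fun j' => by
    have hgu : DifferentiableAt ℝ (g j' u) (r j') := (hg j').comp (r j') (by fun_prop)
    rw [fderiv_apply_zero_prod (hg j').comp_fst_eval_snd]
    exact fderiv_comp_apply_eval hgu _
  rw [(hasFDerivAt_expectedCost hFp (fun j => (hg j).comp_fst_eval_snd) v).fderiv]
  simp only [add_apply, sum_apply, smul_apply, smul_eq_mul, hFzero, hgj, zero_add]
  rw [Finset.sum_eq_single j (fun j' _ hj' => by simp [Pi.single_eq_of_ne hj'])
    (fun h => (h (Finset.mem_univ j)).elim), Pi.single_eq_same]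

end Decoupled

/-- KKT conditions for the multi-step risk-sensitive planning problem
with scenario-decoupled react controls: if `(u*, r₁*, …, r_L*)` minimizes
`F u + max_{q ∈ P} ∑ j, q j * g j (u, r j)` over nondegenerate boxes, with `F` and each
`g j` convex and differentiable and `P` a nonempty compact convex subset of `Δ^L`, then
some `v̄ ∈ P` attains the inner maximum at the optimum and the stationarity conditions
hold: the partial derivatives of `u ↦ F u + ∑ j, v̄ j * g j (u, r_j*)` at `u*` are `≤ 0`
at upper-saturated prepare components, `≥ 0` at lower-saturated ones, `= 0` otherwise;
and for each scenario `j`, `v̄ j` times the partial derivatives of `r ↦ g j (u*, r)` at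
`r_j*` are `≤ 0`, `≥ 0`, `= 0` at upper-saturated, lower-saturated, interior react
components respectively. -/
theorem kkt_multi_step
    (L a b : ℕ)
    (F : (Fin a → ℝ) → ℝ)
    (hFconv : ConvexOn ℝ Set.univ F) (hFdiff : Differentiable ℝ F)
    (g : Fin L → (Fin a → ℝ) → (Fin b → ℝ) → ℝ)
    (hgconv : ∀ j, ConvexOn ℝ Set.univ
      (fun p : (Fin a → ℝ) × (Fin b → ℝ) => g j p.1 p.2))
    (hgdiff : ∀ j, Differentiable ℝ
      (fun p : (Fin a → ℝ) × (Fin b → ℝ) => g j p.1 p.2))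
    (ulo uhi : Fin a → ℝ) (hubox : ∀ i, ulo i < uhi i)
    (rlo rhi : Fin L → Fin b → ℝ) (hrbox : ∀ j i, rlo j i < rhi j i)
    (B₀ : Set (Fin a → ℝ)) (hB₀ : B₀ = {u | ∀ i, ulo i ≤ u i ∧ u i ≤ uhi i})
    (B : Fin L → Set (Fin b → ℝ))
    (hB : ∀ j, B j = {r | ∀ i, rlo j i ≤ r i ∧ r i ≤ rhi j i})
    (P : Set (Fin L → ℝ)) (hPne : P.Nonempty) (hPcomp : IsCompact P)
    (hPconv : Convex ℝ P) (hPsub : P ⊆ stdSimplex ℝ (Fin L))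
    (Φ : (Fin a → ℝ) → (Fin L → Fin b → ℝ) → ℝ)
    (hΦ : ∀ u r, Φ u r = F u + sSup {x : ℝ | ∃ q ∈ P, x = ∑ j, q j * g j u (r j)})
    (ustar : Fin a → ℝ) (rstar : Fin L → Fin b → ℝ)
    (hufeas : ustar ∈ B₀) (hrfeas : ∀ j, rstar j ∈ B j)
    (hopt : ∀ u ∈ B₀, ∀ r : Fin L → Fin b → ℝ, (∀ j, r j ∈ B j) →
      Φ ustar rstar ≤ Φ u r) :
    ∃ v ∈ P,
      (∑ j, v j * g j ustar (rstar j)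
        = sSup {x : ℝ | ∃ q ∈ P, x = ∑ j, q j * g j ustar (rstar j)}) ∧
      (∀ i : Fin a,
        (ustar i = uhi i →
          fderiv ℝ (fun u => F u + ∑ j, v j * g j u (rstar j)) ustar
            (Pi.single i 1) ≤ 0) ∧
        (ustar i = ulo i →
          0 ≤ fderiv ℝ (fun u => F u + ∑ j, v j * g j u (rstar j)) ustar
            (Pi.single i 1)) ∧
        (ustar i ≠ uhi i → ustar i ≠ ulo i →
          fderiv ℝ (fun u => F u + ∑ j, v j * g j u (rstar j)) ustar
            (Pi.single i 1) = 0)) ∧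
      (∀ j : Fin L, ∀ i : Fin b,
        (rstar j i = rhi j i →
          v j * fderiv ℝ (fun r => g j ustar r) (rstar j) (Pi.single i 1) ≤ 0) ∧
        (rstar j i = rlo j i →
          0 ≤ v j * fderiv ℝ (fun r => g j ustar r) (rstar j) (Pi.single i 1)) ∧
        (rstar j i ≠ rhi j i → rstar j i ≠ rlo j i →
          v j * fderiv ℝ (fun r => g j ustar r) (rstar j) (Pi.single i 1) = 0)) := by
  subst hB₀
  obtain rfl : B = fun j => {r | ∀ i, rlo j i ≤ r i ∧ r i ≤ rhi j i} := funext hB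
  let e := (Pi.basisFun ℝ (Fin a)).prod (Pi.basis fun _ : Fin L => Pi.basisFun ℝ (Fin b))
  have hbox : ∀ p : (Fin a → ℝ) × (Fin L → Fin b → ℝ),
      (∀ k, e.repr p k ∈ Icc (Sum.elim ulo (fun k => rlo k.1 k.2) k)
        (Sum.elim uhi (fun k => rhi k.1 k.2) k)) ↔
      p.1 ∈ {u | ∀ i, ulo i ≤ u i ∧ u i ≤ uhi i} ∧
        ∀ j, p.2 j ∈ {r | ∀ i, rlo j i ≤ r i ∧ r i ≤ rhi j i} := by
    simp [e, Sum.forall, Sigma.forall]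
  have hFx : DifferentiableAt ℝ (fun p : (Fin a → ℝ) × (Fin L → Fin b → ℝ) => F p.1)
      (ustar, rstar) := (hFdiff _).comp _ differentiableAt_fst
  have hgx := fun j => (hgdiff j (ustar, rstar j)).comp_fst_eval_snd
  obtain ⟨v, hvP, hvact, hvK⟩ := exists_kkt_of_isMinOn_box e
    (F := fun p : (Fin a → ℝ) × (Fin L → Fin b → ℝ) => F p.1)
    (h := fun j (p : (Fin a → ℝ) × (Fin L → Fin b → ℝ)) => g j p.1 (p.2 j))
    (Sum.forall.2 ⟨hubox, fun k => hrbox k.1 k.2⟩)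
    (hFconv.comp_linearMap (LinearMap.fst ℝ _ _))
    (fun j => (hgconv j).comp_linearMap (LinearMap.prodMap LinearMap.id
      (LinearMap.proj (R := ℝ) (φ := fun _ : Fin L => Fin b → ℝ) j)))
    hFx hgx hPcomp hPne hPconv (fun q hq => (hPsub hq).1) ((hbox _).2 ⟨hufeas, hrfeas⟩)
    (fun p hp => by
      simpa [hΦ, coherentRisk_eq_sSup] using hopt p.1 ((hbox p).1 hp).1 p.2 ((hbox p).1 hp).2)
  refine ⟨v, hvP, by rwa [coherentRisk_eq_sSup] at hvact, fun i => ?_, fun j i => ?_⟩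
  · simpa [e, expectedCost,
      fderiv_apply_prod_zero (hasFDerivAt_expectedCost hFx hgx v).differentiableAt]
      using hvK (.inl i)
  · simpa [e, fderiv_expectedCost_apply_zero_single (hFdiff _) (fun j => hgdiff j _)]
      using hvK (.inr ⟨j, i⟩)
end
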